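/- arXiv:2409.12006 — 4 statements merged into one kernel-verified Lean document; each statement's English description precedes it below -/
import Mathlib

section
/- Let (X,d) be a Gromov δ-hyperbolic metric space and h ≥ 0. Let α: x ⇝ u and α̃: x ⇝ ũ be h-short arcs in X with the same initial point x, and let z be a point on α and z̃ a point on α̃ such that d(x,z) = d(x,z̃) ≤ (u|ũ)_x. Then d(z, z̃) ≤ 4δ + h. -/
open Set Filter

/-- The Gromov product `(x|y)_ω = (d(x,ω) + d(y,ω) - d(x,y)) / 2`. -/
noncomputable def gromovProd {X : Type*} [MetricSpace X] (x y ω : X) : ℝ :=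
  (dist x ω + dist y ω - dist x y) / 2

lemma short_arc_ineq {X : Type*} [MetricSpace X] (h : ℝ) (hh : 0 ≤ h) (x u : X) (α : ℝ → X)
    (hα0 : α 0 = x) (hα1 : α 1 = u)
    (hαshort : eVariationOn α (Icc 0 1) ≤ ENNReal.ofReal (dist x u + h))
    (t : ℝ) (ht : t ∈ Icc (0:ℝ) 1) :
    dist x (α t) + dist (α t) u ≤ dist x u + h := by
  have h1 : edist (α 0) (α t) ≤ eVariationOn α (Icc 0 t) :=
    eVariationOn.edist_le α ⟨le_refl 0, ht.1⟩ ⟨ht.1, le_refl t⟩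
  have h2 : edist (α t) (α 1) ≤ eVariationOn α (Icc t 1) :=
    eVariationOn.edist_le α ⟨le_refl t, ht.2⟩ ⟨ht.2, le_refl 1⟩
  have key : edist (α 0) (α t) + edist (α t) (α 1) ≤ ENNReal.ofReal (dist x u + h) := by
    calc edist (α 0) (α t) + edist (α t) (α 1)
        ≤ eVariationOn α (Icc 0 t) + eVariationOn α (Icc t 1) := add_le_add h1 h2
      _ = eVariationOn α (Icc 0 1) := by
          have := eVariationOn.Icc_add_Icc α (s := Set.univ) ht.1 ht.2 (Set.mem_univ t)
          simpa using this
      _ ≤ _ := hαshort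
  rw [hα0, hα1] at key
  rw [edist_dist, edist_dist, ← ENNReal.ofReal_add dist_nonneg dist_nonneg] at key
  exact (ENNReal.ofReal_le_ofReal_iff (by positivity)).mp key

/-- In a Gromov `δ`-hyperbolic metric space, let `α : x ⇝ u` and `α̃ : x ⇝ ũ`
be `h`-short arcs with the same initial point `x`, and let `z = α t` on `α` and `z̃ = α̃ t'`
on `α̃` with `d(x,z) = d(x,z̃) ≤ (u|ũ)_x`. Then `d(z,z̃) ≤ 4δ + h`. -/
theorem dist_le_of_shortArcs_sameLengthParam {X : Type*} [MetricSpace X]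
    (δ : ℝ) (hδ : 0 ≤ δ)
    (hhyp : ∀ x y z ω : X,
      gromovProd x y ω ≥ min (gromovProd x z ω) (gromovProd z y ω) - δ)
    (h : ℝ) (hh : 0 ≤ h) (x u u' : X) (α α' : ℝ → X)
    (hαc : ContinuousOn α (Icc 0 1)) (hαi : InjOn α (Icc 0 1))
    (hα0 : α 0 = x) (hα1 : α 1 = u)
    (hαshort : eVariationOn α (Icc 0 1) ≤ ENNReal.ofReal (dist x u + h))
    (hα'c : ContinuousOn α' (Icc 0 1)) (hα'i : InjOn α' (Icc 0 1))
    (hα'0 : α' 0 = x) (hα'1 : α' 1 = u')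
    (hα'short : eVariationOn α' (Icc 0 1) ≤ ENNReal.ofReal (dist x u' + h))
    (t t' : ℝ) (ht : t ∈ Icc (0:ℝ) 1) (ht' : t' ∈ Icc (0:ℝ) 1)
    (heq : dist x (α t) = dist x (α' t'))
    (hle : dist x (α t) ≤ gromovProd u u' x) :
    dist (α t) (α' t') ≤ 4 * δ + h := by
  have hz := short_arc_ineq h hh x u α hα0 hα1 hαshort t ht
  have hz' := short_arc_ineq h hh x u' α' hα'0 hα'1 hα'short t' ht'
  have g1 : gromovProd (α t) u x ≥ dist x (α t) - h / 2 := by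
    simp only [gromovProd]
    rw [dist_comm (α t) x, dist_comm u x]
    linarith
  have g2 : gromovProd u' (α' t') x ≥ dist x (α t) - h / 2 := by
    simp only [gromovProd]
    rw [dist_comm (α' t') x, dist_comm u' (α' t'), dist_comm u' x]
    linarith
  have h1 := hhyp u (α' t') u' x
  have h2 := hhyp (α t) (α' t') u x
  have key : gromovProd (α t) (α' t') x ≥ dist x (α t) - h / 2 - 2 * δ := by
    have hmin1 : min (gromovProd u u' x) (gromovProd u' (α' t') x) ≥ dist x (α t) - h / 2 :=
      le_min (by linarith) g2
    have h3 : gromovProd u (α' t') x ≥ dist x (α t) - h / 2 - δ := by linarith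
    have hmin2 : min (gromovProd (α t) u x) (gromovProd u (α' t') x)
        ≥ dist x (α t) - h / 2 - δ := le_min (by linarith) h3
    linarith
  simp only [gromovProd] at key
  rw [dist_comm (α t) x, dist_comm (α' t') x] at key
  linarith
end

section
/- Let (X,d) be a Gromov δ-hyperbolic metric space and h ≥ 0. Let α: x ⇝ u and α̃: x ⇝ ũ be h-short arcs in X with the same initial point x, let z be a point on α with d(x,z) ≤ (u|ũ)_x and ℓ(α|[x,z]) ≤ ℓ(α̃), and let w be the point on α̃ with ℓ(α̃|[x,w]) = ℓ(α|[x,z]). Then d(z, w) ≤ 4δ + 2h. -/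
open Set Filter

lemma myIcc_split {X : Type*} [PseudoEMetricSpace X] (f : ℝ → X) {T : ℝ}
    (hT : T ∈ Icc (0:ℝ) 1) :
    eVariationOn f (Icc 0 T) + eVariationOn f (Icc T 1) = eVariationOn f (Icc 0 1) := by
  have := eVariationOn.Icc_add_Icc f (a := 0) (b := T) (c := 1) hT.1 hT.2
    (s := Icc (0:ℝ) 1) hT
  simpa [Icc_inter_Icc, max_eq_left hT.1, max_eq_right hT.1,
    min_eq_right hT.2, min_eq_left hT.2] using this

/-- In a Gromov `δ`-hyperbolic metric space, let `α : x ⇝ u` and `α̃ : x ⇝ ũ`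
be `h`-short arcs with the same initial point `x`, let `z = α t` be a point on `α` with
`d(x,z) ≤ (u|ũ)_x` and `ℓ(α|[x,z]) ≤ ℓ(α̃)`, and let `w = α̃ s` be the point on `α̃` with
`ℓ(α̃|[x,w]) = ℓ(α|[x,z])`. Then `d(z,w) ≤ 4δ + 2h`. -/
theorem dist_le_of_shortArcs_lengthMapPoint {X : Type*} [MetricSpace X]
    (δ : ℝ) (hδ : 0 ≤ δ)
    (hhyp : ∀ x y z ω : X,
      gromovProd x y ω ≥ min (gromovProd x z ω) (gromovProd z y ω) - δ)
    (h : ℝ) (hh : 0 ≤ h) (x u u' : X) (α α' : ℝ → X)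
    (hαc : ContinuousOn α (Icc 0 1)) (hαi : InjOn α (Icc 0 1))
    (hα0 : α 0 = x) (hα1 : α 1 = u)
    (hαshort : eVariationOn α (Icc 0 1) ≤ ENNReal.ofReal (dist x u + h))
    (hα'c : ContinuousOn α' (Icc 0 1)) (hα'i : InjOn α' (Icc 0 1))
    (hα'0 : α' 0 = x) (hα'1 : α' 1 = u')
    (hα'short : eVariationOn α' (Icc 0 1) ≤ ENNReal.ofReal (dist x u' + h))
    (t s : ℝ) (ht : t ∈ Icc (0:ℝ) 1) (hs : s ∈ Icc (0:ℝ) 1)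
    (hdist : dist x (α t) ≤ gromovProd u u' x)
    (hlen : eVariationOn α (Icc 0 t) ≤ eVariationOn α' (Icc 0 1))
    (hw : eVariationOn α' (Icc 0 s) = eVariationOn α (Icc 0 t)) :
    dist (α t) (α' s) ≤ 4 * δ + 2 * h := by
  have hfin1 : eVariationOn α (Icc 0 1) ≠ ⊤ :=
    (lt_of_le_of_lt hαshort ENNReal.ofReal_lt_top).ne
  have hfin1' : eVariationOn α' (Icc 0 1) ≠ ⊤ :=
    (lt_of_le_of_lt hα'short ENNReal.ofReal_lt_top).ne
  have hsplit : eVariationOn α (Icc 0 t) + eVariationOn α (Icc t 1)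
      = eVariationOn α (Icc 0 1) := myIcc_split α ht
  have hsplit' : eVariationOn α' (Icc 0 s) + eVariationOn α' (Icc s 1)
      = eVariationOn α' (Icc 0 1) := myIcc_split α' hs
  have hEfin : eVariationOn α (Icc 0 t) ≠ ⊤ := by
    refine ne_top_of_le_ne_top hfin1 ?_
    rw [← hsplit]; exact le_self_add
  have hE'fin : eVariationOn α' (Icc 0 s) ≠ ⊤ := by
    refine ne_top_of_le_ne_top hfin1' ?_
    rw [← hsplit']; exact le_self_add
  set L : ℝ := (eVariationOn α (Icc 0 t)).toReal with hL
  have hLeq : (eVariationOn α' (Icc 0 s)).toReal = L := by rw [hw]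
  -- A : dist x (α t) ≤ L
  have A : dist x (α t) ≤ L := by
    have := eVariationOn.edist_le α (x := 0) (y := t)
      (s := Icc 0 t) ⟨le_rfl, ht.1⟩ ⟨ht.1, le_rfl⟩
    rw [hα0] at this
    have := ENNReal.toReal_le_toReal (by simp [edist_ne_top]) hEfin |>.2 this
    rwa [← dist_edist] at this
  -- C : dist x (α' s) ≤ L
  have C : dist x (α' s) ≤ L := by
    have := eVariationOn.edist_le α' (x := 0) (y := s)
      (s := Icc 0 s) ⟨le_rfl, hs.1⟩ ⟨hs.1, le_rfl⟩
    rw [hα'0] at this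
    have := ENNReal.toReal_le_toReal (by simp [edist_ne_top]) hE'fin |>.2 this
    rw [← dist_edist] at this
    rwa [hLeq] at this
  -- B : L + dist (α t) u ≤ dist x u + h
  have B : L + dist (α t) u ≤ dist x u + h := by
    have h1 : edist (α t) u ≤ eVariationOn α (Icc t 1) := by
      have := eVariationOn.edist_le α (x := t) (y := 1)
        (s := Icc t 1) ⟨le_rfl, ht.2⟩ ⟨ht.2, le_rfl⟩
      rwa [hα1] at this
    have h2 : eVariationOn α (Icc 0 t) + edist (α t) u ≤ ENNReal.ofReal (dist x u + h) :=
      le_trans (add_le_add_right h1 _) (hsplit ▸ hαshort)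
    have h3 := ENNReal.toReal_le_toReal
      (by exact ENNReal.add_ne_top.2 ⟨hEfin, edist_ne_top _ _⟩) ENNReal.ofReal_ne_top |>.2 h2
    rw [ENNReal.toReal_add hEfin (edist_ne_top _ _), ← dist_edist,
      ENNReal.toReal_ofReal (by positivity)] at h3
    exact h3
  -- D : L + dist (α' s) u' ≤ dist x u' + h
  have D : L + dist (α' s) u' ≤ dist x u' + h := by
    have h1 : edist (α' s) u' ≤ eVariationOn α' (Icc s 1) := by
      have := eVariationOn.edist_le α' (x := s) (y := 1)
        (s := Icc s 1) ⟨le_rfl, hs.2⟩ ⟨hs.2, le_rfl⟩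
      rwa [hα'1] at this
    have h2 : eVariationOn α' (Icc 0 s) + edist (α' s) u' ≤ ENNReal.ofReal (dist x u' + h) :=
      le_trans (add_le_add_right h1 _) (hsplit' ▸ hα'short)
    have h3 := ENNReal.toReal_le_toReal
      (by exact ENNReal.add_ne_top.2 ⟨hE'fin, edist_ne_top _ _⟩) ENNReal.ofReal_ne_top |>.2 h2
    rw [ENNReal.toReal_add hE'fin (edist_ne_top _ _), ← dist_edist,
      ENNReal.toReal_ofReal (by positivity), hLeq] at h3
    exact h3
  set a := dist x (α t)
  set b := dist x (α' s)
  have step1 : gromovProd u (α' s) x ≥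
      min (gromovProd u u' x) (gromovProd u' (α' s) x) - δ := hhyp u (α' s) u' x
  have step2 : gromovProd (α t) (α' s) x ≥
      min (gromovProd (α t) u x) (gromovProd u (α' s) x) - δ := hhyp (α t) (α' s) u x
  have G1 : gromovProd (α t) u x ≥ (a + b) / 2 - h := by
    simp only [gromovProd]
    rw [dist_comm (α t) x, dist_comm u x]
    linarith
  have G2 : gromovProd u u' x ≥ (a + b) / 2 - h := by
    have htr := dist_triangle x (α t) u
    linarith
  have G3 : gromovProd u' (α' s) x ≥ (a + b) / 2 - h := by
    simp only [gromovProd]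
    rw [dist_comm (α' s) x, dist_comm u' x, dist_comm u' (α' s)]
    linarith
  have Gmid : gromovProd u (α' s) x ≥ (a + b) / 2 - h - δ :=
    le_trans (by linarith [le_min G2 G3] : (a+b)/2 - h - δ ≤
      min (gromovProd u u' x) (gromovProd u' (α' s) x) - δ) step1
  have Gfin : gromovProd (α t) (α' s) x ≥ (a + b) / 2 - h - 2 * δ := by
    have := le_min (by linarith : (a+b)/2 - h - δ ≤ gromovProd (α t) u x) Gmid
    linarith [step2]
  simp only [gromovProd, dist_comm (α t) x, dist_comm (α' s) x] at Gfin
  linarith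
end

section
/- Let (X,d) be a Gromov δ-hyperbolic metric space, x ∈ X, h > 0. Let {u_m} be a Gromov sequence in X, let γ_m: x ⇝ u_m be h-short arcs, and let x_m be a point on γ_m for each m such that d(x, x_m) → ∞ as m → ∞. Then {x_m} is a Gromov sequence in X and {x_m} is equivalent to {u_m}. -/
open Set Filter

/-- In a Gromov `δ`-hyperbolic metric space, let `{u_m}` be a Gromov sequence,
`γ_m : x ⇝ u_m` be `h`-short arcs, and `x_m = γ_m (t_m)` points on `γ_m` with
`d(x, x_m) → ∞`. Then `{x_m}` is a Gromov sequence equivalent to `{u_m}`. -/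
theorem gromovSequence_of_points_on_shortArcs {X : Type*} [MetricSpace X]
    (δ : ℝ) (hδ : 0 ≤ δ)
    (hhyp : ∀ x y z ω : X,
      gromovProd x y ω ≥ min (gromovProd x z ω) (gromovProd z y ω) - δ)
    (h : ℝ) (hh : 0 < h) (x : X) (u : ℕ → X)
    (hu : Tendsto (fun p : ℕ × ℕ => gromovProd (u p.1) (u p.2) x) atTop atTop)
    (γ : ℕ → ℝ → X)
    (hγc : ∀ m, ContinuousOn (γ m) (Icc 0 1)) (hγi : ∀ m, InjOn (γ m) (Icc 0 1))
    (hγ0 : ∀ m, γ m 0 = x) (hγ1 : ∀ m, γ m 1 = u m)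
    (hγshort : ∀ m, eVariationOn (γ m) (Icc 0 1) ≤ ENNReal.ofReal (dist x (u m) + h))
    (t : ℕ → ℝ) (htmem : ∀ m, t m ∈ Icc (0:ℝ) 1)
    (hdist : Tendsto (fun m => dist x (γ m (t m))) atTop atTop) :
    Tendsto (fun p : ℕ × ℕ => gromovProd (γ p.1 (t p.1)) (γ p.2 (t p.2)) x) atTop atTop ∧
    Tendsto (fun m => gromovProd (γ m (t m)) (u m) x) atTop atTop := by
  -- key geometric estimate: the point lies on an h-short arc
  have key : ∀ m, dist x (γ m (t m)) + dist (γ m (t m)) (u m) ≤ dist x (u m) + h := by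
    intro m
    obtain ⟨h0, h1⟩ := htmem m
    have hsplit := eVariationOn.Icc_add_Icc (γ m) (s := Icc (0:ℝ) 1) h0 h1 (htmem m)
    have e1 : Icc (0:ℝ) 1 ∩ Icc 0 (t m) = Icc 0 (t m) := by
      rw [Set.Icc_inter_Icc]; simp [h1]
    have e2 : Icc (0:ℝ) 1 ∩ Icc (t m) 1 = Icc (t m) 1 := by
      rw [Set.Icc_inter_Icc]; simp [h0]
    have e3 : Icc (0:ℝ) 1 ∩ Icc 0 1 = Icc (0:ℝ) 1 := by simp
    rw [e1, e2, e3] at hsplit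
    have d1 : edist (γ m 0) (γ m (t m)) ≤ eVariationOn (γ m) (Icc 0 (t m)) :=
      eVariationOn.edist_le _ (left_mem_Icc.2 h0) (right_mem_Icc.2 h0)
    have d2 : edist (γ m (t m)) (γ m 1) ≤ eVariationOn (γ m) (Icc (t m) 1) :=
      eVariationOn.edist_le _ (left_mem_Icc.2 h1) (right_mem_Icc.2 h1)
    have d1' : edist x (γ m (t m)) ≤ eVariationOn (γ m) (Icc 0 (t m)) := by
      rw [← hγ0 m]; exact d1
    have d2' : edist (γ m (t m)) (u m) ≤ eVariationOn (γ m) (Icc (t m) 1) := by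
      rw [← hγ1 m]; exact d2
    have hle : ENNReal.ofReal (dist x (γ m (t m)) + dist (γ m (t m)) (u m))
        ≤ ENNReal.ofReal (dist x (u m) + h) := by
      rw [ENNReal.ofReal_add dist_nonneg dist_nonneg, ← edist_dist, ← edist_dist]
      exact le_trans (add_le_add d1' d2') (hsplit ▸ hγshort m)
    exact (ENNReal.ofReal_le_ofReal_iff (by positivity)).1 hle
  -- hence the Gromov product (x_m | u_m) is large
  have key2 : ∀ m, dist x (γ m (t m)) - h / 2 ≤ gromovProd (γ m (t m)) (u m) x := by
    intro m
    have := key m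
    have hd : dist (γ m (t m)) x = dist x (γ m (t m)) := dist_comm _ _
    have hu' : dist (u m) x = dist x (u m) := dist_comm _ _
    unfold gromovProd
    rw [hd, hu']
    linarith
  have h2 : Tendsto (fun m => gromovProd (γ m (t m)) (u m) x) atTop atTop := by
    refine tendsto_atTop_mono key2 ?_
    exact (tendsto_atTop_add_const_right _ (-(h/2)) hdist).congr (by intro m; ring_nf)
  refine ⟨?_, h2⟩
  -- first part via two applications of hyperbolicity
  have hbound : ∀ p : ℕ × ℕ,
      min (gromovProd (γ p.1 (t p.1)) (u p.1) x)
        (min (gromovProd (u p.1) (u p.2) x) (gromovProd (γ p.2 (t p.2)) (u p.2) x)) - 2 * δ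
      ≤ gromovProd (γ p.1 (t p.1)) (γ p.2 (t p.2)) x := by
    rintro ⟨m, n⟩
    have A := hhyp (γ m (t m)) (γ n (t n)) (u m) x
    have B := hhyp (u m) (γ n (t n)) (u n) x
    have hsymm : gromovProd (u n) (γ n (t n)) x = gromovProd (γ n (t n)) (u n) x := by
      unfold gromovProd; rw [dist_comm (u n) (γ n (t n))]; ring
    rw [hsymm] at B
    simp only [ge_iff_le] at A B
    have : min (gromovProd (u m) (u n) x) (gromovProd (γ n (t n)) (u n) x) - δ
        ≤ gromovProd (u m) (γ n (t n)) x := B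
    rcases le_total (gromovProd (γ m (t m)) (u m) x) (gromovProd (u m) (γ n (t n)) x) with hc | hc <;>
    rcases le_total (gromovProd (u m) (u n) x) (gromovProd (γ n (t n)) (u n) x) with hc2 | hc2 <;>
      simp [min_def, hc, hc2] at A B ⊢ <;> split_ifs <;> linarith
  refine tendsto_atTop_mono hbound ?_
  have tfst : Tendsto (Prod.fst : ℕ × ℕ → ℕ) atTop atTop := by
    rw [← prod_atTop_atTop_eq]; exact tendsto_fst
  have tsnd : Tendsto (Prod.snd : ℕ × ℕ → ℕ) atTop atTop := by
    rw [← prod_atTop_atTop_eq]; exact tendsto_snd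
  have t1 : Tendsto (fun p : ℕ × ℕ => gromovProd (γ p.1 (t p.1)) (u p.1) x) atTop atTop :=
    h2.comp tfst
  have t2 : Tendsto (fun p : ℕ × ℕ => gromovProd (γ p.2 (t p.2)) (u p.2) x) atTop atTop :=
    h2.comp tsnd
  rw [tendsto_atTop] at t1 t2 hu ⊢
  intro b
  filter_upwards [t1 (b + 2 * δ), t2 (b + 2 * δ), hu (b + 2 * δ)] with p h1' h2' h3'
  have : b + 2 * δ ≤ min (gromovProd (γ p.1 (t p.1)) (u p.1) x)
      (min (gromovProd (u p.1) (u p.2) x) (gromovProd (γ p.2 (t p.2)) (u p.2) x)) :=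
    le_min h1' (le_min h3' h2')
  linarith
end

section
/- Let (X,d) be a Gromov δ-hyperbolic length space, let x ∈ X, let {u_i} be a Gromov sequence in X, and let h > 0. Then there exist a sequence of arcs β_m: x ⇝ x_m in X and a Gromov sequence {x_m} equivalent to {u_i} such that: (1) each β_m is h-short; (2) the sequence of lengths ℓ(β_m) is increasing and tends to ∞; and (3) for m ≤ n there is a length map f_{mn}: β_m → β_n with f_{mn}(x) = x satisfying d(f_{mn}(z), z) ≤ 4δ + 2h for all points z on β_m. -/
open Set Filter

namespace ShortArcAux

variable {X : Type*} [MetricSpace X]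

lemma varAdd (f : ℝ → X) {a b c : ℝ} (hab : a ≤ b) (hbc : b ≤ c) :
    eVariationOn f (Icc a b) + eVariationOn f (Icc b c) = eVariationOn f (Icc a c) := by
  have := eVariationOn.Icc_add_Icc f (s := univ) hab hbc (mem_univ b)
  simpa using this

lemma id_var {a b : ℝ} (hab : a ≤ b) :
    eVariationOn (id : ℝ → ℝ) (Icc a b) = ENNReal.ofReal (b - a) := by
  apply le_antisymm
  · have hm : MonotoneOn (id : ℝ → ℝ) (Icc a b) := fun x _ y _ h => h
    have ha : a ∈ Icc a b := ⟨le_rfl, hab⟩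
    have hb : b ∈ Icc a b := ⟨hab, le_rfl⟩
    have h2 := hm.eVariationOn_le ha hb
    simpa using h2
  · have ha : a ∈ Icc a b := ⟨le_rfl, hab⟩
    have hb : b ∈ Icc a b := ⟨hab, le_rfl⟩
    have h3 := eVariationOn.edist_le (id : ℝ → ℝ) ha hb
    have : edist a b = ENNReal.ofReal (b - a) := by
      rw [edist_dist, Real.dist_eq, abs_of_nonpos (by linarith), neg_sub]
    rwa [← this]

lemma lip_var_le {f : ℝ → X} {C : NNReal} {a b : ℝ} (hab : a ≤ b)
    (hf : LipschitzOnWith C f (Icc a b)) :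
    eVariationOn f (Icc a b) ≤ C * ENNReal.ofReal (b - a) := by
  have := hf.comp_eVariationOn_le (g := (id : ℝ → ℝ)) (s := Icc a b) (mapsTo_id _)
  rwa [Function.comp_id, id_var hab] at this

lemma one_lip_var_le {f : ℝ → X} {a b : ℝ} (hab : a ≤ b)
    (hf : LipschitzOnWith 1 f (Icc a b)) :
    eVariationOn f (Icc a b) ≤ ENNReal.ofReal (b - a) := by
  simpa using lip_var_le hab hf


lemma var_right_cont {f : ℝ → X} {a b : ℝ} (hf : ContinuousOn f (Icc a b))
    (hfin : eVariationOn f (Icc a b) ≠ ⊤) {t0 : ℝ} (ht0 : t0 ∈ Icc a b) {ε : ℝ} (hε : 0 < ε) :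
    ∃ δ > 0, ∀ t ∈ Icc a b, t0 ≤ t → t ≤ t0 + δ →
      eVariationOn f (Icc t0 t) ≤ ENNReal.ofReal ε := by
  classical
  set V := eVariationOn f (Icc t0 b) with hV
  have hVle : V ≤ eVariationOn f (Icc a b) := eVariationOn.mono f (Icc_subset_Icc ht0.1 le_rfl)
  have hVfin : V ≠ ⊤ := fun h => hfin (top_le_iff.mp (h ▸ hVle))
  by_cases hVc : V ≤ ENNReal.ofReal ε
  · exact ⟨1, one_pos, fun t ht h1 _ =>
      le_trans (eVariationOn.mono f (Icc_subset_Icc le_rfl ht.2)) hVc⟩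
  · push_neg at hVc
    have hVpos : V ≠ 0 := ((zero_le).trans_lt hVc).ne'
    have he4 : (0:ℝ) < ε/4 := by linarith
    have he4' : ENNReal.ofReal (ε/4) ≠ 0 := by
      simp only [ne_eq, ENNReal.ofReal_eq_zero, not_le]; linarith
    have hlt : V - ENNReal.ofReal (ε/4) < V := ENNReal.sub_lt_self hVfin hVpos he4'
    obtain ⟨⟨n, ⟨u, hu, us⟩⟩, hsum⟩ :
        ∃ p : ℕ × { u : ℕ → ℝ // Monotone u ∧ ∀ i, u i ∈ Icc t0 b },
          V - ENNReal.ofReal (ε/4) <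
            ∑ i ∈ Finset.range p.1, edist (f ((p.2 : ℕ → ℝ) (i + 1))) (f ((p.2 : ℕ → ℝ) i)) :=
      lt_iSup_iff.mp hlt
    have ht0b : t0 ≤ b := ht0.2
    set w : ℕ → ℝ := fun i => if i = 0 then t0 else u (i - 1) with hw
    have hws : ∀ i, w i ∈ Icc t0 b := by
      intro i
      by_cases h : i = 0
      · simp only [hw, h, if_pos rfl]
        exact ⟨le_rfl, ht0b⟩
      · simpa only [hw, if_neg h] using us (i-1)
    have hwmono : Monotone w := by
      intro i j hij
      by_cases hi : i = 0
      · by_cases hj : j = 0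
        · simp [hw, hi, hj]
        · simp only [hw, hi, if_pos rfl, if_neg hj]
          exact (us (j-1)).1
      · have hj : j ≠ 0 := by omega
        simp only [hw, if_neg hi, if_neg hj]
        exact hu (by omega)
    set W : ℕ → ENNReal := fun i => edist (f (w (i+1))) (f (w i)) with hW
    have hsum2 : V - ENNReal.ofReal (ε/4) < ∑ i ∈ Finset.range (n+1), W i := by
      have hfw : ∀ i, w (i+1) = u i := fun i => by simp [hw]
      have hterm : ∀ i, W (i+1) = edist (f (u (i+1))) (f (u i)) := fun i => by
        simp only [hW]; rw [hfw, hfw]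
      refine hsum.trans_le ?_
      rw [Finset.sum_range_succ' W n]
      refine le_trans (le_of_eq ?_) le_self_add
      exact Finset.sum_congr rfl fun i _ => (hterm i).symm
    set m := n + 1 with hm
    set P : ℕ → Prop := fun i => w i = t0 with hP
    set k := Nat.findGreatest P m with hk
    have hk_le : k ≤ m := Nat.findGreatest_le m
    have hP0 : P 0 := by simp [hP, hw]
    have hwk : w k = t0 := Nat.findGreatest_spec (Nat.zero_le m) hP0
    have hwi : ∀ i ≤ k, w i = t0 := fun i hi =>
      le_antisymm (hwk ▸ hwmono hi) (hws i).1
    by_cases hkm : k = m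
    · exfalso
      have hz : ∑ i ∈ Finset.range m, W i = 0 :=
        Finset.sum_eq_zero fun i hi => by
          rw [Finset.mem_range] at hi
          simp only [hW]
          rw [hwi (i+1) (by omega), hwi i (by omega), edist_self]
      rw [hz] at hsum2
      exact (not_lt_of_ge zero_le) hsum2
    · have hkm' : k < m := lt_of_le_of_ne hk_le hkm
      have hwk1 : t0 < w (k+1) := by
        rcases lt_or_eq_of_le (hws (k+1)).1 with h | h
        · exact h
        · exfalso
          have hng : ¬ P (k+1) :=
            Nat.findGreatest_is_greatest (n := m) (by omega) (by omega)
          exact hng h.symm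
      obtain ⟨δ0, hδ0, hδc⟩ := Metric.continuousWithinAt_iff.mp (hf t0 ht0) (ε/4) he4
      set t1 := min (w (k+1)) (t0 + δ0/2) with ht1
      have ht1a : t0 < t1 := lt_min hwk1 (by linarith)
      have ht1w : t1 ≤ w (k+1) := min_le_left _ _
      have ht1b : t1 ∈ Icc a b := ⟨le_trans ht0.1 ht1a.le, le_trans ht1w (hws (k+1)).2⟩
      have ht1d : dist t1 t0 < δ0 := by
        have h2 : t1 ≤ t0 + δ0/2 := min_le_right _ _
        rw [Real.dist_eq, abs_of_nonneg (by linarith)]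
        linarith
      have hedist : edist (f t1) (f t0) ≤ ENNReal.ofReal (ε/4) := by
        rw [edist_dist]
        exact ENNReal.ofReal_le_ofReal (le_of_lt (hδc ht1b ht1d))
      set v : ℕ → ℝ := fun i => if i = 0 then t1 else w (k + i) with hv
      have hvmono : Monotone v := by
        intro i j hij
        by_cases hi : i = 0
        · by_cases hj : j = 0
          · simp [hv, hi, hj]
          · simp only [hv, hi, if_pos rfl, if_neg hj]
            exact le_trans ht1w (hwmono (by omega))
        · have hj : j ≠ 0 := by omega
          simp only [hv, if_neg hi, if_neg hj]
          exact hwmono (by omega)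
      have hvs : ∀ i, v i ∈ Icc t1 b := by
        intro i
        by_cases hi : i = 0
        · simp only [hv, hi, if_pos rfl]
          exact ⟨le_rfl, ht1b.2⟩
        · simp only [hv, if_neg hi]
          exact ⟨le_trans ht1w (hwmono (by omega)), (hws _).2⟩
      set G : ℕ → ENNReal := fun i => edist (f (v (i+1))) (f (v i)) with hG
      have htail : ∑ i ∈ Finset.range (m - k), G i ≤ eVariationOn f (Icc t1 b) :=
        eVariationOn.sum_le (f := f) (n := m - k) hvmono hvs
      have hhead : ∑ i ∈ Finset.range (k+1), W i = W k := by
        rw [Finset.sum_range_succ]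
        have hz : ∑ i ∈ Finset.range k, W i = 0 := Finset.sum_eq_zero fun i hi => by
          rw [Finset.mem_range] at hi
          simp only [hW]
          rw [hwi (i+1) (by omega), hwi i (by omega), edist_self]
        rw [hz, zero_add]
      have hWk : W k ≤ ENNReal.ofReal (ε/4) + edist (f (w (k+1))) (f t1) := by
        simp only [hW, hwk]
        calc edist (f (w (k+1))) (f t0)
            ≤ edist (f (w (k+1))) (f t1) + edist (f t1) (f t0) := edist_triangle _ _ _
          _ ≤ edist (f (w (k+1))) (f t1) + ENNReal.ofReal (ε/4) := add_le_add le_rfl hedist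
          _ = ENNReal.ofReal (ε/4) + edist (f (w (k+1))) (f t1) := add_comm _ _
      have htail_eq : ∑ i ∈ Finset.range (m - k), G i
          = edist (f (w (k+1))) (f t1) + ∑ i ∈ Finset.Ico (k+1) m, W i := by
        have hmk : m - k = (m - (k+1)) + 1 := by omega
        rw [hmk, Finset.sum_range_succ', Finset.sum_Ico_eq_sum_range]
        have hG0 : G 0 = edist (f (w (k+1))) (f t1) := by
          have h1 : (0+1 : ℕ) ≠ 0 := by omega
          simp only [hG, hv, if_neg h1, if_pos rfl]
          norm_num
        have hGs : ∀ i, G (i+1) = W (k+1+i) := fun i => by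
          have h1 : (i+1+1 : ℕ) ≠ 0 := by omega
          have h2 : (i+1 : ℕ) ≠ 0 := by omega
          simp only [hG, hv, hW, if_neg h1, if_neg h2]
          have e3 : k + (i+1+1) = k + 1 + i + 1 := by omega
          have e4 : k + (i+1) = k + 1 + i := by omega
          rw [e3, e4]
        rw [hG0, show (∑ i ∈ Finset.range (m-(k+1)), G (i+1))
            = ∑ i ∈ Finset.range (m-(k+1)), W (k+1+i) from
            Finset.sum_congr rfl fun i _ => hGs i]
        exact add_comm _ _
      have hsplit : ∑ i ∈ Finset.range m, W i
          ≤ ENNReal.ofReal (ε/4) + ∑ i ∈ Finset.range (m - k), G i := by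
        calc ∑ i ∈ Finset.range m, W i
            = ∑ i ∈ Finset.range (k+1), W i + ∑ i ∈ Finset.Ico (k+1) m, W i := by
              rw [Finset.range_eq_Ico,
                ← Finset.sum_Ico_consecutive W (Nat.zero_le (k+1)) (by omega : k+1 ≤ m),
                ← Finset.range_eq_Ico]
          _ = W k + ∑ i ∈ Finset.Ico (k+1) m, W i := by rw [hhead]
          _ ≤ (ENNReal.ofReal (ε/4) + edist (f (w (k+1))) (f t1))
              + ∑ i ∈ Finset.Ico (k+1) m, W i := add_le_add hWk le_rfl
          _ = ENNReal.ofReal (ε/4) + ∑ i ∈ Finset.range (m - k), G i := by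
              rw [htail_eq, add_assoc]
      have hVb : V ≤ (ENNReal.ofReal (ε/4) + ENNReal.ofReal (ε/4)) + eVariationOn f (Icc t1 b) := by
        have h5 : V - ENNReal.ofReal (ε/4)
            ≤ ENNReal.ofReal (ε/4) + eVariationOn f (Icc t1 b) :=
          hsum2.le.trans (hsplit.trans (add_le_add le_rfl htail))
        calc V ≤ (V - ENNReal.ofReal (ε/4)) + ENNReal.ofReal (ε/4) := le_tsub_add
          _ ≤ (ENNReal.ofReal (ε/4) + eVariationOn f (Icc t1 b)) + ENNReal.ofReal (ε/4) :=
            add_le_add h5 le_rfl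
          _ = (ENNReal.ofReal (ε/4) + ENNReal.ofReal (ε/4)) + eVariationOn f (Icc t1 b) := by
            ring
      have hadd : eVariationOn f (Icc t0 t1) + eVariationOn f (Icc t1 b) = V :=
        varAdd f ht1a.le ht1b.2
      have hfin1 : eVariationOn f (Icc t1 b) ≠ ⊤ := by
        intro h
        apply hVfin
        rw [← hadd, h, add_top]
      have hkey : eVariationOn f (Icc t0 t1) ≤ ENNReal.ofReal (ε/4) + ENNReal.ofReal (ε/4) := by
        rw [← hadd] at hVb
        exact (ENNReal.add_le_add_iff_right hfin1).mp hVb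
      refine ⟨t1 - t0, by linarith, fun t ht htl htu => ?_⟩
      have hsub : Icc t0 t ⊆ Icc t0 t1 := Icc_subset_Icc le_rfl (by linarith)
      refine le_trans (eVariationOn.mono f hsub) (le_trans hkey ?_)
      rw [← ENNReal.ofReal_add (by linarith) (by linarith)]
      exact ENNReal.ofReal_le_ofReal (by linarith)


lemma neg_image_Icc (c d : ℝ) : (Neg.neg : ℝ → ℝ) '' Icc c d = Icc (-d) (-c) := by
  ext x
  constructor
  · rintro ⟨y, ⟨h1, h2⟩, rfl⟩
    exact ⟨by linarith, by linarith⟩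
  · rintro ⟨h1, h2⟩
    exact ⟨-x, ⟨by linarith, by linarith⟩, by ring⟩

lemma var_left_cont {f : ℝ → X} {a b : ℝ} (hf : ContinuousOn f (Icc a b))
    (hfin : eVariationOn f (Icc a b) ≠ ⊤) {t0 : ℝ} (ht0 : t0 ∈ Icc a b) {ε : ℝ} (hε : 0 < ε) :
    ∃ δ > 0, ∀ t ∈ Icc a b, t ≤ t0 → t0 - δ ≤ t →
      eVariationOn f (Icc t t0) ≤ ENNReal.ofReal ε := by
  set g : ℝ → X := fun r => f (-r) with hg
  have hvg : ∀ c d : ℝ, eVariationOn g (Icc c d) = eVariationOn f (Icc (-d) (-c)) := by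
    intro c d
    have h1 : AntitoneOn (Neg.neg : ℝ → ℝ) (Icc c d) := fun x _ y _ h => neg_le_neg h
    have := eVariationOn.comp_eq_of_antitoneOn f (Neg.neg : ℝ → ℝ) h1
    rw [neg_image_Icc] at this
    exact this
  have hgc : ContinuousOn g (Icc (-b) (-a)) := by
    apply hf.comp continuous_neg.continuousOn
    intro x hx
    have h1 := hx.1
    have h2 := hx.2
    constructor <;> dsimp only <;> linarith
  have hgfin : eVariationOn g (Icc (-b) (-a)) ≠ ⊤ := by
    rw [hvg, neg_neg, neg_neg]
    exact hfin
  have ht0' : -t0 ∈ Icc (-b) (-a) := ⟨neg_le_neg ht0.2, neg_le_neg ht0.1⟩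
  obtain ⟨δ, hδ, hδp⟩ := var_right_cont hgc hgfin ht0' hε
  refine ⟨δ, hδ, fun t ht htle htge => ?_⟩
  have h1 : -t ∈ Icc (-b) (-a) := ⟨neg_le_neg ht.2, neg_le_neg ht.1⟩
  have h2 := hδp (-t) h1 (neg_le_neg htle) (by linarith)
  rwa [hvg, neg_neg, neg_neg] at h2

lemma var_continuousOn {f : ℝ → X} {a b : ℝ} (hf : ContinuousOn f (Icc a b))
    (hfin : eVariationOn f (Icc a b) ≠ ⊤) :
    ContinuousOn (fun t => (eVariationOn f (Icc a t)).toReal) (Icc a b) := by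
  have hfint : ∀ t ∈ Icc a b, eVariationOn f (Icc a t) ≠ ⊤ := fun t ht h =>
    hfin (top_le_iff.mp (h ▸ eVariationOn.mono f (Icc_subset_Icc le_rfl ht.2)))
  intro t0 ht0
  rw [Metric.continuousWithinAt_iff]
  intro ε hε
  have hε2 : 0 < ε/2 := by linarith
  obtain ⟨δ1, hδ1, hr⟩ := var_right_cont hf hfin ht0 hε2
  obtain ⟨δ2, hδ2, hl⟩ := var_left_cont hf hfin ht0 hε2
  refine ⟨min δ1 δ2, lt_min hδ1 hδ2, fun t ht hd => ?_⟩
  rcases le_total t0 t with hc | hc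
  · have hadd := varAdd f (show a ≤ t0 from ht0.1) hc
    have h2 : eVariationOn f (Icc t0 t) ≤ ENNReal.ofReal (ε/2) := by
      refine hr t ht hc ?_
      have h3 : dist t t0 < δ1 := lt_of_lt_of_le hd (min_le_left _ _)
      rw [Real.dist_eq, abs_of_nonneg (by linarith)] at h3
      linarith
    have hne2 : eVariationOn f (Icc t0 t) ≠ ⊤ := (h2.trans_lt ENNReal.ofReal_lt_top).ne
    have heq : (eVariationOn f (Icc a t)).toReal
        = (eVariationOn f (Icc a t0)).toReal + (eVariationOn f (Icc t0 t)).toReal := by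
      rw [← hadd, ENNReal.toReal_add (hfint t0 ht0) hne2]
    have h3 : (eVariationOn f (Icc t0 t)).toReal ≤ ε/2 :=
      ENNReal.toReal_le_of_le_ofReal (le_of_lt hε2) h2
    have h4 : (0:ℝ) ≤ (eVariationOn f (Icc t0 t)).toReal := ENNReal.toReal_nonneg
    rw [Real.dist_eq, heq, abs_of_nonneg (by linarith)]
    linarith
  · have hadd := varAdd f (show a ≤ t from ht.1) hc
    have h2 : eVariationOn f (Icc t t0) ≤ ENNReal.ofReal (ε/2) := by
      refine hl t ht hc ?_
      have h3 : dist t t0 < δ2 := lt_of_lt_of_le hd (min_le_right _ _)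
      rw [Real.dist_eq, abs_of_nonpos (by linarith)] at h3
      linarith
    have hne2 : eVariationOn f (Icc t t0) ≠ ⊤ := (h2.trans_lt ENNReal.ofReal_lt_top).ne
    have heq : (eVariationOn f (Icc a t0)).toReal
        = (eVariationOn f (Icc a t)).toReal + (eVariationOn f (Icc t t0)).toReal := by
      rw [← hadd, ENNReal.toReal_add (hfint t ht) hne2]
    have h3 : (eVariationOn f (Icc t t0)).toReal ≤ ε/2 :=
      ENNReal.toReal_le_of_le_ofReal (le_of_lt hε2) h2
    have h4 : (0:ℝ) ≤ (eVariationOn f (Icc t t0)).toReal := ENNReal.toReal_nonneg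
    rw [Real.dist_eq, heq, abs_of_nonpos (by linarith)]
    linarith


lemma exists_reparam {g : ℝ → X} (hg : ContinuousOn g (Icc 0 1))
    (hfin : eVariationOn g (Icc 0 1) ≠ ⊤) :
    ∃ (σ : ℝ → X) (ρ : ℝ → ℝ) (L : ℝ),
      L = (eVariationOn g (Icc 0 1)).toReal ∧
      MonotoneOn ρ (Icc 0 1) ∧
      (∀ t ∈ Icc (0:ℝ) 1, ENNReal.ofReal (ρ t) = eVariationOn g (Icc 0 t)) ∧
      ρ '' (Icc 0 1) = Icc 0 L ∧
      (∀ t ∈ Icc (0:ℝ) 1, σ (ρ t) = g t) ∧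
      LipschitzOnWith 1 σ (Icc 0 L) ∧
      σ 0 = g 0 ∧ σ L = g 1 ∧
      (∀ s, ∃ t ∈ Icc (0:ℝ) 1, σ s = g t ∧ (s ∈ Icc 0 L → ρ t = s)) := by
  classical
  set ρ : ℝ → ℝ := fun t => (eVariationOn g (Icc 0 t)).toReal with hρ
  set L : ℝ := (eVariationOn g (Icc 0 1)).toReal with hL
  have hLnn : 0 ≤ L := ENNReal.toReal_nonneg
  have hfint : ∀ t ∈ Icc (0:ℝ) 1, eVariationOn g (Icc 0 t) ≠ ⊤ := fun t ht h =>
    hfin (top_le_iff.mp (h ▸ eVariationOn.mono g (Icc_subset_Icc le_rfl ht.2)))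
  have hρval : ∀ t ∈ Icc (0:ℝ) 1, ENNReal.ofReal (ρ t) = eVariationOn g (Icc 0 t) := by
    intro t ht
    simp only [hρ]
    exact ENNReal.ofReal_toReal (hfint t ht)
  have hρnn : ∀ t, 0 ≤ ρ t := fun t => ENNReal.toReal_nonneg
  have hρ0 : ρ 0 = 0 := by
    have h0 : eVariationOn g (Icc (0:ℝ) 0) = 0 := by
      rw [Icc_self]
      exact eVariationOn.subsingleton g subsingleton_singleton
    simp only [hρ, h0, ENNReal.toReal_zero]
  have hρ1 : ρ 1 = L := by simp only [hρ, hL]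
  have hρmono : MonotoneOn ρ (Icc 0 1) := by
    intro s hs t ht hst
    simp only [hρ]
    exact ENNReal.toReal_mono (hfint t ht) (eVariationOn.mono g (Icc_subset_Icc le_rfl hst))
  have hρcont : ContinuousOn ρ (Icc 0 1) := var_continuousOn hg hfin
  have hρL : ∀ t ∈ Icc (0:ℝ) 1, ρ t ∈ Icc 0 L := fun t ht =>
    ⟨hρnn t, by rw [← hρ1]; exact hρmono ht ⟨zero_le_one, le_rfl⟩ ht.2⟩
  have hsurj : Icc 0 L ⊆ ρ '' Icc 0 1 := by
    have := intermediate_value_Icc (zero_le_one (α := ℝ)) hρcont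
    rwa [hρ0, hρ1] at this
  have himg : ρ '' (Icc 0 1) = Icc 0 L := by
    apply Subset.antisymm
    · rintro _ ⟨t, ht, rfl⟩
      exact hρL t ht
    · exact hsurj
  have hvarbet : ∀ s t, s ∈ Icc (0:ℝ) 1 → t ∈ Icc (0:ℝ) 1 → s ≤ t →
      eVariationOn g (Icc s t) = ENNReal.ofReal (ρ t - ρ s) := by
    intro s t hs ht hst
    have hadd := varAdd g hs.1 hst
    rw [← hρval s hs, ← hρval t ht] at hadd
    rw [ENNReal.ofReal_sub _ (hρnn s), ← hadd,
      ENNReal.add_sub_cancel_left ENNReal.ofReal_ne_top]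
  have hgeq : ∀ s t, s ∈ Icc (0:ℝ) 1 → t ∈ Icc (0:ℝ) 1 → ρ s = ρ t → g s = g t := by
    intro s t hs ht he
    rcases le_total s t with h | h
    · have hms : s ∈ Icc s t := ⟨le_rfl, h⟩
      have hmt : t ∈ Icc s t := ⟨h, le_rfl⟩
      have h3 := eVariationOn.edist_le g hms hmt
      rw [hvarbet s t hs ht h, he, sub_self, ENNReal.ofReal_zero] at h3
      have := nonpos_iff_eq_zero.mp h3
      exact edist_eq_zero.mp this
    · have hms : s ∈ Icc t s := ⟨h, le_rfl⟩
      have hmt : t ∈ Icc t s := ⟨le_rfl, h⟩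
      have h3 := eVariationOn.edist_le g hmt hms
      rw [hvarbet t s ht hs h, he, sub_self, ENNReal.ofReal_zero] at h3
      have := nonpos_iff_eq_zero.mp h3
      exact (edist_eq_zero.mp this).symm
  set ψ : ℝ → ℝ := fun s => if hs : ∃ t ∈ Icc (0:ℝ) 1, ρ t = s then hs.choose else 0 with hψ
  have hψ1 : ∀ s, ψ s ∈ Icc (0:ℝ) 1 := by
    intro s
    simp only [hψ]
    split_ifs with h
    · exact h.choose_spec.1
    · exact ⟨le_rfl, zero_le_one⟩
  have hψ2 : ∀ s ∈ Icc 0 L, ρ (ψ s) = s := by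
    intro s hs
    have h : ∃ t ∈ Icc (0:ℝ) 1, ρ t = s := by
      obtain ⟨t, ht, he⟩ := hsurj hs
      exact ⟨t, ht, he⟩
    simp only [hψ, dif_pos h]
    exact h.choose_spec.2
  set σ : ℝ → X := fun s => g (ψ s) with hσ
  have hσρ : ∀ t ∈ Icc (0:ℝ) 1, σ (ρ t) = g t := by
    intro t ht
    simp only [hσ]
    exact hgeq (ψ (ρ t)) t (hψ1 _) ht (hψ2 (ρ t) (hρL t ht))
  have hH : ∀ s ∈ Icc 0 L, ∀ s' ∈ Icc 0 L, s ≤ s' →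
      edist (σ s) (σ s') ≤ ENNReal.ofReal (s' - s) := by
    intro s hs s' hs' h
    have h1 := hψ2 s hs
    have h2 := hψ2 s' hs'
    rcases le_total (ψ s) (ψ s') with h3 | h3
    · have hms : ψ s ∈ Icc (ψ s) (ψ s') := ⟨le_rfl, h3⟩
      have hmt : ψ s' ∈ Icc (ψ s) (ψ s') := ⟨h3, le_rfl⟩
      have h4 := eVariationOn.edist_le g hms hmt
      rw [hvarbet _ _ (hψ1 s) (hψ1 s') h3, h1, h2] at h4
      exact h4
    · have h5 : ρ (ψ s') ≤ ρ (ψ s) := hρmono (hψ1 s') (hψ1 s) h3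
      rw [h1, h2] at h5
      have h6 : s = s' := le_antisymm h h5
      rw [h6, edist_self]
      exact zero_le
  have hlip : LipschitzOnWith 1 σ (Icc 0 L) := by
    intro s hs s' hs'
    rw [ENNReal.coe_one, one_mul]
    rcases le_total s s' with h | h
    · refine (hH s hs s' hs' h).trans (le_of_eq ?_)
      rw [edist_dist, Real.dist_eq, abs_of_nonpos (by linarith), neg_sub]
    · rw [edist_comm]
      refine (hH s' hs' s hs h).trans (le_of_eq ?_)
      rw [edist_dist, Real.dist_eq, abs_of_nonneg (by linarith)]
  have hσ0 : σ 0 = g 0 := by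
    have h0 : (0:ℝ) ∈ Icc 0 L := ⟨le_rfl, hLnn⟩
    simp only [hσ]
    exact hgeq (ψ 0) 0 (hψ1 0) ⟨le_rfl, zero_le_one⟩ (by rw [hψ2 0 h0, hρ0])
  have hσL : σ L = g 1 := by
    have hL0 : L ∈ Icc 0 L := ⟨hLnn, le_rfl⟩
    simp only [hσ]
    exact hgeq (ψ L) 1 (hψ1 L) ⟨zero_le_one, le_rfl⟩ (by rw [hψ2 L hL0, hρ1])
  refine ⟨σ, ρ, L, rfl, hρmono, hρval, himg, hσρ, hlip, hσ0, hσL, fun s => ⟨ψ s, hψ1 s, rfl, fun hs => hψ2 s hs⟩⟩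


lemma exists_min_var {C : Set (ℝ → X)} (hC : IsCompact C) (hne : C.Nonempty) (s : Set ℝ) :
    ∃ f ∈ C, ∀ g ∈ C, eVariationOn f s ≤ eVariationOn g s := by
  classical
  set F : (ℝ → X) → ENNReal := fun f => eVariationOn f s with hF
  have hlsc : LowerSemicontinuous F := by
    intro f v hv
    exact eVariationOn.lowerSemicontinuous_aux (F := fun φ : ℝ → X => φ) (p := nhds f)
      (fun x _ => (continuous_apply x).tendsto f) hv
  set m : ENNReal := ⨅ f : C, F f with hm
  have hclosed : ∀ c : ENNReal, IsClosed {f : ℝ → X | F f ≤ c} := fun c =>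
    lowerSemicontinuous_iff_isClosed_preimage.mp hlsc c
  set T : ℕ → Set (ℝ → X) := fun n => C ∩ {f | F f ≤ m + (↑(n+1) : ENNReal)⁻¹} with hT
  have hTne : ∀ n, (T n).Nonempty := by
    intro n
    by_cases htop : m = ⊤
    · obtain ⟨f, hf⟩ := hne
      refine ⟨f, hf, ?_⟩
      simp only [mem_setOf_eq, htop, top_add]
      exact le_top
    · have hlt : m < m + (↑(n+1 : ℕ) : ENNReal)⁻¹ := ENNReal.lt_add_right htop
        (ENNReal.inv_ne_zero.mpr (ENNReal.natCast_ne_top _))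
      obtain ⟨⟨f, hf⟩, hflt⟩ := iInf_lt_iff.mp hlt
      exact ⟨f, hf, hflt.le⟩
  have hTsub : ∀ n, T (n+1) ⊆ T n := by
    intro n f hf
    refine ⟨hf.1, le_trans hf.2 (add_le_add le_rfl (ENNReal.inv_le_inv.mpr ?_))⟩
    exact_mod_cast Nat.le_succ (n+1)
  have hTclosed : ∀ n, IsClosed (T n) := fun n => (hC.isClosed).inter (hclosed _)
  have hTcomp : IsCompact (T 0) := hC.of_isClosed_subset (hTclosed 0) inter_subset_left
  obtain ⟨f, hf⟩ :=
    IsCompact.nonempty_iInter_of_sequence_nonempty_isCompact_isClosed T hTsub hTne hTcomp hTclosed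
  rw [mem_iInter] at hf
  refine ⟨f, (hf 0).1, fun g hg => ?_⟩
  have h1 : F f ≤ m := by
    by_cases htop : m = ⊤
    · rw [htop]; exact le_top
    · refine ENNReal.le_of_forall_pos_le_add fun ε hε _ => ?_
      obtain ⟨n, hn⟩ := ENNReal.exists_inv_nat_lt
        (show ((ε : ENNReal)) ≠ 0 from ENNReal.coe_ne_zero.mpr hε.ne')
      refine le_trans ((hf n).2) ?_
      have h2 : ((↑(n+1) : ENNReal))⁻¹ ≤ (↑n : ENNReal)⁻¹ := by
        refine ENNReal.inv_le_inv.mpr ?_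
        exact_mod_cast Nat.le_succ n
      exact add_le_add le_rfl (h2.trans hn.le)
  exact h1.trans (iInf_le (fun f : C => F (f : ℝ → X)) ⟨g, hg⟩)


lemma exists_good_arc
    (hlength : ∀ p q : X, ∀ ε : ℝ, 0 < ε → ∃ γ : ℝ → X, ContinuousOn γ (Icc 0 1) ∧
      γ 0 = p ∧ γ 1 = q ∧ eVariationOn γ (Icc 0 1) ≤ ENNReal.ofReal (dist p q + ε))
    (p q : X) {ε : ℝ} (hε : 0 < ε) :
    ∃ (τ : ℝ → X) (L : ℝ), dist p q ≤ L ∧ L ≤ dist p q + ε ∧ τ 0 = p ∧ τ L = q ∧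
      InjOn τ (Icc 0 L) ∧ LipschitzOnWith 1 τ (Icc 0 L) ∧
      ∀ a b : ℝ, 0 ≤ a → a ≤ b → b ≤ L →
        eVariationOn τ (Icc a b) = ENNReal.ofReal (b - a) := by
  classical
  obtain ⟨γ, hγc, hγ0, hγ1, hγv⟩ := hlength p q (ε/2) (by linarith)
  have hγfin : eVariationOn γ (Icc 0 1) ≠ ⊤ := (hγv.trans_lt ENNReal.ofReal_lt_top).ne
  obtain ⟨σ0, ρ0, L0, hL0def, _, _, _, _, hlip0, hσ00, hσ0L, hlink0⟩ := exists_reparam hγc hγfin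
  have hL0nn : 0 ≤ L0 := hL0def ▸ ENNReal.toReal_nonneg
  have hL0le : L0 ≤ dist p q + ε/2 := by
    rw [hL0def]
    exact ENNReal.toReal_le_of_le_ofReal (by positivity) hγv
  set Λ : NNReal := Real.toNNReal (dist p q + ε) with hΛ
  set K : Set X := γ '' (Icc 0 1) with hK
  have hKcomp : IsCompact K := (isCompact_Icc).image_of_continuousOn hγc
  set c : ℝ → ℝ := fun t => L0 * (max 0 (min t 1)) with hc
  set sd : ℝ → X := fun t => σ0 (c t) with hsd
  have hclamp : ∀ t ∈ Icc (0:ℝ) 1, c t = L0 * t := by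
    intro t ht
    simp only [hc]
    rw [min_eq_left ht.2, max_eq_right ht.1]
  have hc0 : c 0 = 0 := by rw [hclamp 0 ⟨le_rfl, zero_le_one⟩, mul_zero]
  have hc1 : c 1 = L0 := by rw [hclamp 1 ⟨zero_le_one, le_rfl⟩, mul_one]
  have hcneg : ∀ t < (0:ℝ), c t = 0 := by
    intro t ht
    simp only [hc]
    rw [min_eq_left (by linarith : t ≤ 1), max_eq_left (by linarith : t ≤ 0), mul_zero]
  have hcgt : ∀ t > (1:ℝ), c t = L0 := by
    intro t ht
    simp only [hc]
    rw [min_eq_right (by linarith : (1:ℝ) ≤ t), max_eq_right (zero_le_one (α := ℝ)), mul_one]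
  have hcmem : ∀ t, c t ∈ Icc 0 L0 := by
    intro t
    simp only [hc]
    constructor
    · exact mul_nonneg hL0nn (le_max_left _ _)
    · have h1 : max 0 (min t 1) ≤ 1 := max_le zero_le_one (min_le_right _ _)
      calc L0 * max 0 (min t 1) ≤ L0 * 1 := mul_le_mul_of_nonneg_left h1 hL0nn
        _ = L0 := mul_one L0
  have hsdK : ∀ t, sd t ∈ K := by
    intro t
    obtain ⟨t', ht', heq, _⟩ := hlink0 (c t)
    show σ0 (c t) ∈ K
    rw [heq]
    exact mem_image_of_mem γ ht'
  have hsdneg : ∀ t < (0:ℝ), sd t = p := by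
    intro t ht
    show σ0 (c t) = p
    rw [hcneg t ht, hσ00, hγ0]
  have hsdgt : ∀ t > (1:ℝ), sd t = q := by
    intro t ht
    show σ0 (c t) = q
    rw [hcgt t ht, hσ0L, hγ1]
  have hsd0 : sd 0 = p := by show σ0 (c 0) = p; rw [hc0, hσ00, hγ0]
  have hsd1 : sd 1 = q := by show σ0 (c 1) = q; rw [hc1, hσ0L, hγ1]
  have hsdlipL0 : LipschitzOnWith L0.toNNReal sd (Icc 0 1) := by
    intro t ht t' ht'
    refine le_trans (hlip0 (hcmem t) (hcmem t')) ?_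
    rw [ENNReal.coe_one, one_mul, hclamp t ht, hclamp t' ht']
    rw [edist_dist, edist_dist, Real.dist_eq, Real.dist_eq, ← mul_sub, abs_mul,
      abs_of_nonneg hL0nn]
    rw [show ((L0.toNNReal : ENNReal)) = ENNReal.ofReal L0 from rfl,
      ← ENNReal.ofReal_mul hL0nn]
  have hΛge : L0.toNNReal ≤ Λ := Real.toNNReal_mono (by linarith)
  have hsdlip : LipschitzOnWith Λ sd (Icc 0 1) := fun x hx y hy =>
    le_trans (hsdlipL0 hx hy) (mul_le_mul_left (ENNReal.coe_le_coe.mpr hΛge) _)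
  set CC : Set (ℝ → X) := {f | (∀ t, f t ∈ K) ∧ (∀ t < (0:ℝ), f t = p) ∧
    (∀ t > (1:ℝ), f t = q) ∧ f 0 = p ∧ f 1 = q ∧ LipschitzOnWith Λ f (Icc 0 1)} with hCC
  have hCCclosed : IsClosed CC := by
    have hsing : ∀ (t : ℝ) (z : X), IsClosed {f : ℝ → X | f t = z} := by
      intro t z
      have he : {f : ℝ → X | f t = z} = (fun f : ℝ → X => f t) ⁻¹' {z} := rfl
      rw [he]
      exact (isClosed_singleton (x := z)).preimage (continuous_apply t)
    have hmemK : ∀ t : ℝ, IsClosed {f : ℝ → X | f t ∈ K} := by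
      intro t
      have he : {f : ℝ → X | f t ∈ K} = (fun f : ℝ → X => f t) ⁻¹' K := rfl
      rw [he]
      exact (hKcomp.isClosed).preimage (continuous_apply t)
    have h1 : IsClosed {f : ℝ → X | ∀ t, f t ∈ K} := by
      rw [setOf_forall]
      exact isClosed_iInter hmemK
    have h2 : IsClosed {f : ℝ → X | ∀ t < (0:ℝ), f t = p} := by
      rw [setOf_forall]
      refine isClosed_iInter fun t => ?_
      rcases lt_or_ge t 0 with h | h
      · have he : {f : ℝ → X | t < 0 → f t = p} = {f : ℝ → X | f t = p} := by
          ext f; simp [h]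
        rw [he]
        exact hsing t p
      · have he : {f : ℝ → X | t < 0 → f t = p} = univ := by
          ext f; simp [not_lt.mpr h]
        rw [he]
        exact isClosed_univ
    have h3 : IsClosed {f : ℝ → X | ∀ t > (1:ℝ), f t = q} := by
      rw [setOf_forall]
      refine isClosed_iInter fun t => ?_
      rcases lt_or_ge 1 t with h | h
      · have he : {f : ℝ → X | t > 1 → f t = q} = {f : ℝ → X | f t = q} := by
          ext f; simp [h]
        rw [he]
        exact hsing t q
      · have he : {f : ℝ → X | t > 1 → f t = q} = univ := by
          ext f; simp [not_lt.mpr h]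
        rw [he]
        exact isClosed_univ
    have h4 : IsClosed {f : ℝ → X | f 0 = p} := hsing 0 p
    have h5 : IsClosed {f : ℝ → X | f 1 = q} := hsing 1 q
    have h6 : IsClosed {f : ℝ → X | LipschitzOnWith Λ f (Icc 0 1)} := by
      have he : {f : ℝ → X | LipschitzOnWith Λ f (Icc 0 1)} =
          ⋂ (a : ℝ) (_ : a ∈ Icc (0:ℝ) 1) (b : ℝ) (_ : b ∈ Icc (0:ℝ) 1),
            {f : ℝ → X | edist (f a) (f b) ≤ (Λ : ENNReal) * edist a b} := by
        ext f
        simp only [mem_setOf_eq, mem_iInter]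
        exact ⟨fun h a ha b hb => h ha hb, fun h a ha b hb => h a ha b hb⟩
      rw [he]
      refine isClosed_iInter fun a => isClosed_iInter fun _ =>
        isClosed_iInter fun b => isClosed_iInter fun _ => ?_
      exact isClosed_le (((continuous_apply a).edist (continuous_apply b))) continuous_const
    rw [hCC]
    simp only [setOf_and]
    exact h1.inter (h2.inter (h3.inter (h4.inter (h5.inter h6))))
  have hCCcomp : IsCompact CC := by
    refine (isCompact_univ_pi fun _ : ℝ => hKcomp).of_isClosed_subset hCCclosed ?_
    intro f hf
    rw [mem_univ_pi]
    exact hf.1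
  have hseed : sd ∈ CC := ⟨hsdK, hsdneg, hsdgt, hsd0, hsd1, hsdlip⟩
  obtain ⟨σs, hσsC, hσsmin⟩ := exists_min_var hCCcomp ⟨sd, hseed⟩ (Icc 0 1)
  obtain ⟨hσsK, hσsneg, hσsgt, hσs0, hσs1, hσslip⟩ := hσsC
  set M := eVariationOn σs (Icc 0 1) with hM
  have hsdvar : eVariationOn sd (Icc 0 1) ≤ ENNReal.ofReal L0 := by
    have h := lip_var_le (zero_le_one (α := ℝ)) hsdlipL0
    rwa [show ((L0.toNNReal : ENNReal)) = ENNReal.ofReal L0 from rfl,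
      show (1:ℝ) - 0 = 1 by ring, ENNReal.ofReal_one, mul_one] at h
  have hMle : M ≤ ENNReal.ofReal L0 := (hσsmin sd hseed).trans hsdvar
  have hMfin : M ≠ ⊤ := (hMle.trans_lt ENNReal.ofReal_lt_top).ne
  have hMge : edist p q ≤ M := by
    have hm0 : (0:ℝ) ∈ Icc (0:ℝ) 1 := ⟨le_rfl, zero_le_one⟩
    have hm1 : (1:ℝ) ∈ Icc (0:ℝ) 1 := ⟨zero_le_one, le_rfl⟩
    have h := eVariationOn.edist_le σs hm0 hm1
    rwa [hσs0, hσs1] at h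
  have hσscont : ContinuousOn σs (Icc 0 1) := hσslip.continuousOn
  obtain ⟨τ, ρ, Mr, hMrdef, hρmono, hρval, hρimg, hτρ, hτlip, hτ0, hτL, hlink⟩ :=
    exists_reparam hσscont hMfin
  have hMr1 : ENNReal.ofReal Mr = M := by rw [hMrdef]; exact ENNReal.ofReal_toReal hMfin
  have hMrnn : 0 ≤ Mr := hMrdef ▸ ENNReal.toReal_nonneg
  have hdistle : dist p q ≤ Mr := by
    have h := ENNReal.toReal_mono hMfin hMge
    rwa [← dist_edist, ← hMrdef] at h
  have hMrle : Mr ≤ dist p q + ε := by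
    have h : M.toReal ≤ L0 := ENNReal.toReal_le_of_le_ofReal hL0nn hMle
    rw [hMrdef]
    linarith
  have hτtot : eVariationOn τ (Icc 0 Mr) = M := by
    have h1 : EqOn (τ ∘ ρ) σs (Icc 0 1) := fun t ht => hτρ t ht
    have h2 := eVariationOn.comp_eq_of_monotoneOn τ ρ hρmono
    rw [hρimg] at h2
    rw [← h2, eVariationOn.eq_of_eqOn h1]
  have hτvar : ∀ a b : ℝ, 0 ≤ a → a ≤ b → b ≤ Mr →
      eVariationOn τ (Icc a b) = ENNReal.ofReal (b - a) := by
    intro a b ha hab hbMr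
    have h1 : eVariationOn τ (Icc 0 a) ≤ ENNReal.ofReal (a - 0) :=
      one_lip_var_le ha (hτlip.mono (Icc_subset_Icc le_rfl (by linarith)))
    have h2 : eVariationOn τ (Icc a b) ≤ ENNReal.ofReal (b - a) :=
      one_lip_var_le hab (hτlip.mono (Icc_subset_Icc ha hbMr))
    have h3 : eVariationOn τ (Icc b Mr) ≤ ENNReal.ofReal (Mr - b) :=
      one_lip_var_le hbMr (hτlip.mono (Icc_subset_Icc (by linarith) le_rfl))
    have hadd : eVariationOn τ (Icc 0 a) + eVariationOn τ (Icc a b) + eVariationOn τ (Icc b Mr)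
        = ENNReal.ofReal Mr := by
      rw [varAdd τ ha hab, varAdd τ (le_trans ha hab) hbMr, hτtot, hMr1]
    by_contra hne
    have hlt : eVariationOn τ (Icc a b) < ENNReal.ofReal (b - a) := lt_of_le_of_ne h2 hne
    have hfa : eVariationOn τ (Icc 0 a) ≠ ⊤ := (h1.trans_lt ENNReal.ofReal_lt_top).ne
    have hfc : eVariationOn τ (Icc b Mr) ≠ ⊤ := (h3.trans_lt ENNReal.ofReal_lt_top).ne
    have hstrict : eVariationOn τ (Icc 0 a) + eVariationOn τ (Icc a b) + eVariationOn τ (Icc b Mr)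
        < ENNReal.ofReal (a - 0) + ENNReal.ofReal (b - a) + ENNReal.ofReal (Mr - b) :=
      ENNReal.add_lt_add_of_lt_of_le hfc (ENNReal.add_lt_add_of_le_of_lt hfa h1 hlt) h3
    rw [hadd] at hstrict
    rw [← ENNReal.ofReal_add (by linarith) (by linarith),
      ← ENNReal.ofReal_add (by linarith) (by linarith)] at hstrict
    have : Mr < a - 0 + (b - a) + (Mr - b) := by
      by_contra hcon
      push_neg at hcon
      exact absurd (ENNReal.ofReal_le_ofReal hcon) (not_le.mpr hstrict)
    linarith
  have hinj : InjOn τ (Icc 0 Mr) := by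
    have haux : ∀ s ∈ Icc 0 Mr, ∀ s' ∈ Icc 0 Mr, s < s' → τ s ≠ τ s' := by
      intro s hs s' hs' hlt heq
      obtain ⟨t, ht, hτs, hρts⟩ := hlink s
      obtain ⟨t', ht', hτs', hρts'⟩ := hlink s'
      have hρt := hρts hs
      have hρt' := hρts' hs'
      have httlt : t < t' := by
        by_contra hcon
        push_neg at hcon
        have h := hρmono ht' ht hcon
        rw [hρt, hρt'] at h
        linarith
      have hvar_tt : eVariationOn σs (Icc t t') = ENNReal.ofReal (s' - s) := by
        have hadd := varAdd σs ht.1 httlt.le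
        rw [← hρval t ht, ← hρval t' ht', hρt, hρt'] at hadd
        rw [ENNReal.ofReal_sub _ hs.1, ← hadd,
          ENNReal.add_sub_cancel_left ENNReal.ofReal_ne_top]
      have hσeq : σs t = σs t' := by
        rw [← hτρ t ht, ← hτρ t' ht', hρt, hρt']
        exact heq
      set Δ := t' - t with hΔ
      have hΔpos : 0 < Δ := by rw [hΔ]; linarith
      set φc : ℝ → ℝ := fun r => if r ≤ t then r else min (r + Δ) 1 with hφc
      set gc : ℝ → X := fun r => σs (φc r) with hgc
      have hφc_le : ∀ r, r ≤ t → φc r = r := fun r h => by simp only [hφc, if_pos h]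
      have hφc_gt : ∀ r, ¬ (r ≤ t) → φc r = min (r + Δ) 1 := fun r h => by
        simp only [hφc, if_neg h]
      have htΔ : t + Δ = t' := by rw [hΔ]; ring
      have hφcmem : ∀ r ∈ Icc (0:ℝ) 1, φc r ∈ Icc (0:ℝ) 1 := by
        intro r hr
        by_cases h : r ≤ t
        · rw [hφc_le r h]; exact hr
        · rw [hφc_gt r h]
          push_neg at h
          constructor
          · exact le_min (by linarith [hr.1]) zero_le_one
          · exact min_le_right _ _
      set φm : ℝ → ℝ := fun r => min (r + Δ) 1 with hφm
      have hφmt : φm t = t' := by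
        simp only [hφm]
        rw [htΔ]
        exact min_eq_left ht'.2
      have hlipH : ∀ a ∈ Icc (0:ℝ) 1, ∀ b ∈ Icc (0:ℝ) 1, a ≤ b →
          edist (gc a) (gc b) ≤ (Λ : ENNReal) * edist a b := by
        intro a ha b hb hab
        by_cases hbt : b ≤ t
        · have hat : a ≤ t := le_trans hab hbt
          show edist (σs (φc a)) (σs (φc b)) ≤ _
          rw [hφc_le a hat, hφc_le b hbt]
          exact hσslip ha hb
        · by_cases hat : a ≤ t
          · -- a ≤ t < b
            push_neg at hbt
            have hmb : min (b + Δ) 1 ∈ Icc (0:ℝ) 1 :=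
              ⟨le_min (by linarith [ha.1]) zero_le_one, min_le_right _ _⟩
            have hmbt' : t' ≤ min (b + Δ) 1 := le_min (by linarith) ht'.2
            show edist (σs (φc a)) (σs (φc b)) ≤ _
            rw [hφc_le a hat, hφc_gt b (not_le.mpr hbt)]
            calc edist (σs a) (σs (min (b + Δ) 1))
                ≤ edist (σs a) (σs t) + edist (σs t) (σs (min (b + Δ) 1)) :=
                  edist_triangle _ _ _
              _ = edist (σs a) (σs t) + edist (σs t') (σs (min (b + Δ) 1)) := by rw [hσeq]
              _ ≤ (Λ : ENNReal) * edist a t + (Λ : ENNReal) * edist t' (min (b + Δ) 1) :=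
                  add_le_add (hσslip ha ht) (hσslip ht' hmb)
              _ = (Λ : ENNReal) * (ENNReal.ofReal (t - a) + ENNReal.ofReal (min (b + Δ) 1 - t')) := by
                  rw [← mul_add]
                  congr 2
                  · rw [edist_dist, Real.dist_eq, abs_of_nonpos (by linarith), neg_sub]
                  · rw [edist_dist, Real.dist_eq, abs_of_nonpos (by linarith [hmbt']), neg_sub]
              _ ≤ (Λ : ENNReal) * ENNReal.ofReal (b - a) := by
                  refine mul_le_mul_right ?_ _
                  rw [← ENNReal.ofReal_add (by linarith) (by linarith [hmbt'])]
                  refine ENNReal.ofReal_le_ofReal ?_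
                  have : min (b + Δ) 1 ≤ b + Δ := min_le_left _ _
                  linarith
              _ = (Λ : ENNReal) * edist a b := by
                  rw [edist_dist, Real.dist_eq, abs_of_nonpos (by linarith), neg_sub]
          · -- t < a ≤ b
            push_neg at hat
            show edist (σs (φc a)) (σs (φc b)) ≤ _
            rw [hφc_gt a (not_le.mpr hat), hφc_gt b (by push_neg at hbt; exact not_le.mpr hbt)]
            have hma : min (a + Δ) 1 ∈ Icc (0:ℝ) 1 :=
              ⟨le_min (by linarith [ha.1]) zero_le_one, min_le_right _ _⟩
            have hmb : min (b + Δ) 1 ∈ Icc (0:ℝ) 1 :=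
              ⟨le_min (by linarith [hb.1]) zero_le_one, min_le_right _ _⟩
            refine le_trans (hσslip hma hmb) (mul_le_mul_right ?_ _)
            have hmono : min (a + Δ) 1 ≤ min (b + Δ) 1 := min_le_min (by linarith) le_rfl
            have hdiff : min (b + Δ) 1 - min (a + Δ) 1 ≤ b - a := by
              rcases le_total (a + Δ) 1 with h1 | h1
              · rcases le_total (b + Δ) 1 with h2 | h2
                · rw [min_eq_left h1, min_eq_left h2]; linarith
                · rw [min_eq_left h1, min_eq_right h2]; linarith
              · have h2 : (1:ℝ) ≤ b + Δ := by linarith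
                rw [min_eq_right h1, min_eq_right h2]; linarith
            rw [edist_dist, Real.dist_eq, abs_of_nonpos (by linarith), neg_sub,
              edist_dist, Real.dist_eq, abs_of_nonpos (by linarith), neg_sub]
            exact ENNReal.ofReal_le_ofReal hdiff
      have hgclip : LipschitzOnWith Λ gc (Icc 0 1) := by
        intro x hx y hy
        rcases le_total x y with h | h
        · exact hlipH x hx y hy h
        · rw [edist_comm, edist_comm x y]
          exact hlipH y hy x hx h
      have hgcC : gc ∈ CC := by
        refine ⟨fun r => hσsK _, ?_, ?_, ?_, ?_, hgclip⟩
        · intro r hr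
          show σs (φc r) = p
          rw [hφc_le r (by linarith [ht.1])]
          exact hσsneg r hr
        · intro r hr
          show σs (φc r) = q
          rw [hφc_gt r (by push_neg; linarith [ht.2])]
          have : min (r + Δ) 1 = 1 := min_eq_right (by linarith)
          rw [this]
          exact hσs1
        · show σs (φc 0) = p
          rw [hφc_le 0 ht.1]
          exact hσs0
        · show σs (φc 1) = q
          have ht1 : ¬ ((1:ℝ) ≤ t) := by push_neg; linarith [ht'.2]
          rw [hφc_gt 1 ht1]
          have : min (1 + Δ) 1 = 1 := min_eq_right (by linarith)
          rw [this]
          exact hσs1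
      have hEq1 : EqOn gc σs (Icc 0 t) := by
        intro r hr
        show σs (φc r) = σs r
        rw [hφc_le r hr.2]
      have hEq2 : EqOn gc (σs ∘ φm) (Icc t 1) := by
        intro r hr
        by_cases h : r ≤ t
        · have hrt : r = t := le_antisymm h hr.1
          show σs (φc r) = σs (φm r)
          rw [hrt, hφc_le t le_rfl, hφmt, hσeq]
        · show σs (φc r) = σs (φm r)
          rw [hφc_gt r h]
      have hmono_φm : MonotoneOn φm (Icc t 1) := by
        intro x _ y _ h
        simp only [hφm]
        exact min_le_min (by linarith) le_rfl
      have himgφm : φm '' (Icc t 1) = Icc t' 1 := by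
        apply Subset.antisymm
        · rintro _ ⟨r, hr, rfl⟩
          constructor
          · simp only [hφm]
            exact le_min (by linarith [hr.1]) ht'.2
          · exact min_le_right _ _
        · intro y hy
          refine ⟨y - Δ, ⟨by linarith [hy.1], by linarith [hy.2, hΔpos]⟩, ?_⟩
          simp only [hφm]
          rw [sub_add_cancel]
          exact min_eq_left hy.2
      have hv1 : eVariationOn gc (Icc 0 t) = eVariationOn σs (Icc 0 t) :=
        eVariationOn.eq_of_eqOn hEq1
      have hv2 : eVariationOn gc (Icc t 1) = eVariationOn σs (Icc t' 1) := by
        rw [eVariationOn.eq_of_eqOn hEq2, eVariationOn.comp_eq_of_monotoneOn σs φm hmono_φm,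
          himgφm]
      have htot : eVariationOn gc (Icc 0 1) + ENNReal.ofReal (s' - s) = M := by
        rw [← varAdd gc ht.1 (le_trans httlt.le ht'.2), hv1, hv2, ← hvar_tt, add_right_comm,
          varAdd σs ht.1 httlt.le, varAdd σs (le_trans ht.1 httlt.le) ht'.2]
      have hgcfin : eVariationOn gc (Icc 0 1) ≠ ⊤ := by
        intro h
        rw [h, top_add] at htot
        exact hMfin htot.symm
      have hlt2 : eVariationOn gc (Icc 0 1) < M := by
        rw [← htot]
        refine ENNReal.lt_add_right hgcfin ?_
        simp only [ne_eq, ENNReal.ofReal_eq_zero, not_le]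
        linarith
      exact absurd (hσsmin gc hgcC) (not_le.mpr hlt2)
    intro s hs s' hs' heq
    by_contra hne
    rcases lt_or_gt_of_ne hne with h | h
    · exact haux s hs s' hs' h heq
    · exact haux s' hs' s hs h heq.symm
  refine ⟨τ, Mr, hdistle, hMrle, ?_, ?_, hinj, hτlip, hτvar⟩
  · rw [hτ0, hσs0]
  · rw [hτL, hσs1]


lemma half_trick {A B C : ℝ} (hC : 0 < C) (hAB : A - C/2 ≤ B) : A ≤ B + C := by
  linarith

lemma gromov_comm (a b w : X) : gromovProd a b w = gromovProd b a w := by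
  unfold gromovProd
  rw [dist_comm a b]
  ring

lemma gromov_self (a w : X) : gromovProd a a w = dist a w := by
  unfold gromovProd
  rw [dist_self]
  ring

lemma gromov_lower {x y : X} {τ : ℝ → X} {L e r : ℝ}
    (hτ0 : τ 0 = x) (hτL : τ L = y)
    (hvar : ∀ a b : ℝ, 0 ≤ a → a ≤ b → b ≤ L →
      eVariationOn τ (Icc a b) = ENNReal.ofReal (b - a))
    (hshort : L ≤ dist x y + e) (hr0 : 0 ≤ r) (hrL : r ≤ L) :
    dist x (τ r) ≤ r ∧ r - e ≤ dist x (τ r) ∧ r - e ≤ gromovProd (τ r) y x := by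
  have hA : dist x (τ r) ≤ r := by
    have hm0 : (0:ℝ) ∈ Icc 0 r := ⟨le_rfl, hr0⟩
    have hmr : r ∈ Icc (0:ℝ) r := ⟨hr0, le_rfl⟩
    have hh := eVariationOn.edist_le τ hm0 hmr
    rw [hvar 0 r le_rfl hr0 hrL, hτ0, edist_dist] at hh
    have := (ENNReal.ofReal_le_ofReal_iff (by linarith)).mp hh
    linarith
  have hB : dist (τ r) y ≤ L - r := by
    have hm0 : r ∈ Icc r L := ⟨le_rfl, hrL⟩
    have hmr : L ∈ Icc r L := ⟨hrL, le_rfl⟩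
    have hh := eVariationOn.edist_le τ hm0 hmr
    rw [hvar r L hr0 hrL le_rfl, hτL, edist_dist] at hh
    have := (ENNReal.ofReal_le_ofReal_iff (by linarith)).mp hh
    linarith
  have hD : dist x y ≤ dist x (τ r) + dist (τ r) y := dist_triangle _ _ _
  refine ⟨hA, by linarith, ?_⟩
  unfold gromovProd
  rw [dist_comm (τ r) x, dist_comm y x]
  linarith

end ShortArcAux

open ShortArcAux

/-- Lemma 3.1: Let `X` be a Gromov `δ`-hyperbolic length space, `x ∈ X`,
`{u_i}` a Gromov sequence, `h > 0`. Then there are arcs `β_m : x ⇝ x_m` (parametrized on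
`[0,1]`) with `{x_m}` a Gromov sequence equivalent to `{u_i}`, such that:
(1) each `β_m` is `h`-short;
(2) the sequence of lengths `ℓ(β_m)` is increasing and tends to `∞`;
(3) for `m ≤ n` there is a length map `f_{mn} : β_m → β_n` (given at parameter level by a
monotone map `φ` of `[0,1]` with `ℓ(β_n|[φ u, φ v]) = ℓ(β_m|[u,v])`) fixing `x`
(i.e. `φ 0 = 0`) with `d(f_{mn}(z), z) ≤ 4δ + 2h` for all `z` on `β_m`. -/
theorem exists_shortArcs_to_gromovSequence {X : Type*} [MetricSpace X]
    (δ : ℝ) (hδ : 0 ≤ δ)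
    (hhyp : ∀ x y z ω : X,
      gromovProd x y ω ≥ min (gromovProd x z ω) (gromovProd z y ω) - δ)
    -- `X` is a length space: any two points are joined by curves of length
    -- arbitrarily close to their distance.
    (hlength : ∀ p q : X, ∀ ε : ℝ, 0 < ε → ∃ γ : ℝ → X, ContinuousOn γ (Icc 0 1) ∧
      γ 0 = p ∧ γ 1 = q ∧ eVariationOn γ (Icc 0 1) ≤ ENNReal.ofReal (dist p q + ε))
    (x : X) (u : ℕ → X)
    (hu : Tendsto (fun p : ℕ × ℕ => gromovProd (u p.1) (u p.2) x) atTop atTop)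
    (h : ℝ) (hh : 0 < h) :
    ∃ (β : ℕ → ℝ → X) (xs : ℕ → X),
      -- each `β m` is an arc from `x` to `x_m`
      (∀ m, ContinuousOn (β m) (Icc 0 1) ∧ InjOn (β m) (Icc 0 1) ∧
        β m 0 = x ∧ β m 1 = xs m) ∧
      -- `{x_m}` is a Gromov sequence equivalent to `{u_i}`
      Tendsto (fun p : ℕ × ℕ => gromovProd (xs p.1) (xs p.2) x) atTop atTop ∧
      Tendsto (fun m => gromovProd (xs m) (u m) x) atTop atTop ∧
      -- (1) each `β m` is `h`-short
      (∀ m, eVariationOn (β m) (Icc 0 1) ≤ ENNReal.ofReal (dist x (xs m) + h)) ∧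
      -- (2) the lengths are increasing and tend to `∞`
      Monotone (fun m => (eVariationOn (β m) (Icc 0 1)).toReal) ∧
      Tendsto (fun m => (eVariationOn (β m) (Icc 0 1)).toReal) atTop atTop ∧
      -- (3) length maps `f_{mn}` fixing `x` which move points at most `4δ + 2h`
      (∀ m n, m ≤ n → ∃ φ : ℝ → ℝ,
        MapsTo φ (Icc 0 1) (Icc 0 1) ∧ MonotoneOn φ (Icc 0 1) ∧ φ 0 = 0 ∧
        (∀ a b : ℝ, a ∈ Icc (0:ℝ) 1 → b ∈ Icc (0:ℝ) 1 → a ≤ b →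
          eVariationOn (β n) (Icc (φ a) (φ b)) = eVariationOn (β m) (Icc a b)) ∧
        (∀ s ∈ Icc (0:ℝ) 1, dist (β n (φ s)) (β m s) ≤ 4 * δ + 2 * h)) := by
  classical
  -- uniform Gromov product bounds
  have H : ∀ R : ℝ, ∃ N : ℕ, ∀ i ≥ N, ∀ j ≥ N, R ≤ gromovProd (u i) (u j) x := by
    intro R
    have h1 := (tendsto_atTop.mp hu) R
    rw [eventually_atTop] at h1
    obtain ⟨a, ha⟩ := h1
    refine ⟨max a.1 a.2, fun i hi j hj => ?_⟩
    refine ha (i, j) ?_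
    show a ≤ (i, j)
    rw [Prod.le_def]
    exact ⟨le_trans (le_max_left _ _) hi, le_trans (le_max_right _ _) hj⟩
  choose N hN using H
  -- index selection
  set idx : ℕ → ℕ :=
    fun m => Nat.rec (max (N 1) 0)
      (fun m' ih => max (N ((m' : ℝ) + 2)) (max (ih + 1) (m' + 1))) m with hidx
  have hidx0 : idx 0 = max (N 1) 0 := rfl
  have hidxsucc : ∀ m, idx (m+1) = max (N ((m:ℝ)+2)) (max (idx m + 1) (m+1)) := fun m => rfl
  have hidxmono : Monotone idx := by
    refine monotone_nat_of_le_succ fun m => ?_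
    rw [hidxsucc]
    calc idx m ≤ idx m + 1 := Nat.le_succ _
      _ ≤ max (idx m + 1) (m+1) := le_max_left _ _
      _ ≤ _ := le_max_right _ _
  have hidxge : ∀ m, m ≤ idx m := by
    intro m
    cases m with
    | zero => exact Nat.zero_le _
    | succ m' =>
      rw [hidxsucc]
      calc m' + 1 ≤ max (idx m' + 1) (m'+1) := le_max_right _ _
        _ ≤ _ := le_max_right _ _
  have hidxN : ∀ m : ℕ, N ((m:ℝ)+1) ≤ idx m := by
    intro m
    cases m with
    | zero =>
      rw [hidx0]
      have he : ((0:ℕ):ℝ) + 1 = 1 := by norm_num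
      rw [he]
      exact le_max_left _ _
    | succ m' =>
      rw [hidxsucc]
      have he : ((m'+1 : ℕ):ℝ) + 1 = (m' : ℝ) + 2 := by push_cast; ring
      rw [he]
      exact le_max_left _ _
  have hP : ∀ m : ℕ, ∀ i, idx m ≤ i → ∀ j, idx m ≤ j →
      (m:ℝ)+1 ≤ gromovProd (u i) (u j) x := by
    intro m i hi j hj
    exact hN ((m:ℝ)+1) i (le_trans (hidxN m) hi) j (le_trans (hidxN m) hj)
  have hd : ∀ m : ℕ, (m:ℝ)+1 ≤ dist x (u (idx m)) := by
    intro m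
    have h1 := hP m (idx m) le_rfl (idx m) le_rfl
    rw [gromov_self, dist_comm] at h1
    exact h1
  -- arcs
  have harc := fun m : ℕ => exists_good_arc hlength x (u (idx m)) (half_pos hh)
  choose τ Lf hL1 hL2 hτ0 hτL hinj hlip hvar using harc
  set tm : ℕ → ℝ := fun m => (m:ℝ)+1 with htm
  have htmpos : ∀ m, 0 < tm m := fun m => by positivity
  have htmmono : ∀ m nn : ℕ, m ≤ nn → tm m ≤ tm nn := by
    intro m nn hmn
    simp only [htm]
    have : (m:ℝ) ≤ nn := Nat.cast_le.mpr hmn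
    linarith
  have htmL : ∀ m, tm m ≤ Lf m := fun m => le_trans (hd m) (hL1 m)
  set β : ℕ → ℝ → X := fun m s => τ m (tm m * s) with hβ
  set xs : ℕ → X := fun m => τ m (tm m) with hxs
  have hmemL : ∀ m : ℕ, ∀ s ∈ Icc (0:ℝ) 1, tm m * s ∈ Icc 0 (Lf m) := by
    intro m s hs
    constructor
    · exact mul_nonneg (htmpos m).le hs.1
    · calc tm m * s ≤ tm m * 1 := mul_le_mul_of_nonneg_left hs.2 (htmpos m).le
        _ = tm m := mul_one _
        _ ≤ Lf m := htmL m
  have hβvar : ∀ m : ℕ, ∀ a b : ℝ, a ∈ Icc (0:ℝ) 1 → b ∈ Icc (0:ℝ) 1 → a ≤ b →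
      eVariationOn (β m) (Icc a b) = ENNReal.ofReal (tm m * (b - a)) := by
    intro m a b ha hb hab
    have hmono : MonotoneOn (fun s : ℝ => tm m * s) (Icc a b) := fun p _ q _ hpq =>
      mul_le_mul_of_nonneg_left hpq (htmpos m).le
    have hcomp := eVariationOn.comp_eq_of_monotoneOn (τ m) (fun s : ℝ => tm m * s) hmono
    have himg : (fun s : ℝ => tm m * s) '' Icc a b = Icc (tm m * a) (tm m * b) := by
      have := Set.image_mul_left_Icc (a := tm m) (htmpos m).le hab
      exact this
    have hbL : tm m * b ≤ Lf m := (hmemL m b hb).2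
    have heq : eVariationOn (β m) (Icc a b)
        = eVariationOn (τ m ∘ fun s : ℝ => tm m * s) (Icc a b) := rfl
    rw [heq, hcomp, himg, hvar m (tm m * a) (tm m * b)
      (mul_nonneg (htmpos m).le ha.1) (mul_le_mul_of_nonneg_left hab (htmpos m).le) hbL]
    congr 1
    ring
  -- point estimates
  have hgl : ∀ m : ℕ, ∀ r : ℝ, 0 ≤ r → r ≤ tm m →
      dist x (τ m r) ≤ r ∧ r - h/2 ≤ dist x (τ m r) ∧
        r - h/2 ≤ gromovProd (τ m r) (u (idx m)) x := by
    intro m r h0 hr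
    exact gromov_lower (hτ0 m) (hτL m) (hvar m) (hL2 m) h0 (le_trans hr (htmL m))
  have hxsg : ∀ m : ℕ, tm m - h/2 ≤ gromovProd (xs m) (u (idx m)) x := by
    intro m
    exact (hgl m (tm m) (htmpos m).le le_rfl).2.2
  have hxsd : ∀ m : ℕ, tm m - h/2 ≤ dist x (xs m) := by
    intro m
    exact (hgl m (tm m) (htmpos m).le le_rfl).2.1
  have hlen : ∀ m : ℕ, (eVariationOn (β m) (Icc 0 1)).toReal = tm m := by
    intro m
    rw [hβvar m 0 1 ⟨le_rfl, zero_le_one⟩ ⟨zero_le_one, le_rfl⟩ zero_le_one]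
    rw [ENNReal.toReal_ofReal (by positivity)]
    ring
  refine ⟨β, xs, ?_, ?_, ?_, ?_, ?_, ?_, ?_⟩
  · -- arcs
    intro m
    refine ⟨?_, ?_, ?_, ?_⟩
    · have hc : ContinuousOn (fun s : ℝ => tm m * s) (Icc 0 1) :=
        (continuous_const.mul continuous_id).continuousOn
      have := ((hlip m).continuousOn).comp hc (hmemL m)
      exact this
    · intro a ha b hb heq
      have := hinj m (hmemL m a ha) (hmemL m b hb) heq
      exact mul_left_cancel₀ (htmpos m).ne' this
    · show τ m (tm m * 0) = x
      rw [mul_zero, hτ0 m]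
    · show τ m (tm m * 1) = xs m
      rw [mul_one]
  · -- Gromov sequence xs
    rw [tendsto_atTop]
    intro b
    rw [eventually_atTop]
    obtain ⟨M0, hM0⟩ := exists_nat_ge (b + 2*δ + h/2)
    obtain ⟨M2, hM2⟩ := exists_nat_ge (b + 2*δ)
    refine ⟨(max M0 M2, max M0 M2), fun p hp => ?_⟩
    rw [Prod.le_def] at hp
    set i := p.1
    set j := p.2
    have hi0 : (M0:ℝ) ≤ i := Nat.cast_le.mpr (le_trans (le_max_left _ _) hp.1)
    have hj0 : (M0:ℝ) ≤ j := Nat.cast_le.mpr (le_trans (le_max_left _ _) hp.2)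
    have hi2 : M2 ≤ i := le_trans (le_max_right _ _) hp.1
    have hj2 : M2 ≤ j := le_trans (le_max_right _ _) hp.2
    have g1 : b + 2*δ ≤ gromovProd (xs i) (u (idx i)) x := by
      have := hxsg i
      simp only [htm] at this
      linarith
    have g2 : b + 2*δ ≤ gromovProd (xs j) (u (idx j)) x := by
      have := hxsg j
      simp only [htm] at this
      linarith
    have g3 : b + 2*δ ≤ gromovProd (u (idx i)) (u (idx j)) x := by
      have := hP M2 (idx i) (hidxmono hi2) (idx j) (hidxmono hj2)
      linarith
    have s2 := hhyp (u (idx i)) (xs j) (u (idx j)) x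
    have g2' : b + 2*δ ≤ gromovProd (u (idx j)) (xs j) x := by
      rw [gromov_comm]
      exact g2
    have hmin2 : b + 2*δ ≤ min (gromovProd (u (idx i)) (u (idx j)) x)
        (gromovProd (u (idx j)) (xs j) x) := le_min g3 g2'
    have s2' : b + δ ≤ gromovProd (u (idx i)) (xs j) x := by linarith
    have s1 := hhyp (xs i) (xs j) (u (idx i)) x
    have hmin1 : b + δ ≤ min (gromovProd (xs i) (u (idx i)) x)
        (gromovProd (u (idx i)) (xs j) x) := le_min (by linarith) s2'
    show b ≤ gromovProd (xs i) (xs j) x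
    linarith
  · -- equivalence with u
    rw [tendsto_atTop]
    intro b
    rw [eventually_atTop]
    obtain ⟨M0, hM0⟩ := exists_nat_ge (b + δ + h/2)
    obtain ⟨M2, hM2⟩ := exists_nat_ge (b + δ)
    refine ⟨max (max M0 M2) (idx M2), fun m hm => ?_⟩
    have hm0 : (M0:ℝ) ≤ m :=
      Nat.cast_le.mpr (le_trans (le_trans (le_max_left _ _) (le_max_left _ _)) hm)
    have hm2 : M2 ≤ m := le_trans (le_trans (le_max_right _ _) (le_max_left _ _)) hm
    have hmidx : idx M2 ≤ m := le_trans (le_max_right _ _) hm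
    have g1 : b + δ ≤ gromovProd (xs m) (u (idx m)) x := by
      have := hxsg m
      simp only [htm] at this
      linarith
    have g3 : b + δ ≤ gromovProd (u (idx m)) (u m) x := by
      have := hP M2 (idx m) (hidxmono hm2) m hmidx
      linarith
    have s1 := hhyp (xs m) (u m) (u (idx m)) x
    have hmin1 : b + δ ≤ min (gromovProd (xs m) (u (idx m)) x)
        (gromovProd (u (idx m)) (u m) x) := le_min g1 g3
    show b ≤ gromovProd (xs m) (u m) x
    linarith
  · -- h-short
    intro m
    rw [hβvar m 0 1 ⟨le_rfl, zero_le_one⟩ ⟨zero_le_one, le_rfl⟩ zero_le_one]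
    refine ENNReal.ofReal_le_ofReal ?_
    have h3 := hxsd m
    have h2 : tm m * (1 - 0) = tm m := by ring
    rw [h2]
    exact half_trick hh h3
  · -- monotone lengths
    intro a b hab
    simp only
    rw [hlen a, hlen b]
    exact htmmono a b hab
  · -- lengths tend to infinity
    have he : (fun m => (eVariationOn (β m) (Icc 0 1)).toReal) = fun m : ℕ => (m:ℝ)+1 := by
      funext m
      rw [hlen m]
    rw [he]
    exact tendsto_atTop_add_const_right atTop 1 tendsto_natCast_atTop_atTop
  · -- length maps
    intro m nn hmn
    refine ⟨fun s => (tm m / tm nn) * s, ?_, ?_, ?_, ?_, ?_⟩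
    · intro s hs
      have hratio : tm m / tm nn ≤ 1 := by
        rw [div_le_one (htmpos nn)]
        exact htmmono m nn hmn
      have hrat0 : 0 ≤ tm m / tm nn := div_nonneg (htmpos m).le (htmpos nn).le
      constructor
      · exact mul_nonneg hrat0 hs.1
      · calc tm m / tm nn * s ≤ 1 * s := mul_le_mul_of_nonneg_right hratio hs.1
          _ = s := one_mul s
          _ ≤ 1 := hs.2
    · intro a _ b _ hab
      exact mul_le_mul_of_nonneg_left hab (div_nonneg (htmpos m).le (htmpos nn).le)
    · exact mul_zero _
    · intro a b ha hb hab
      have hrat0 : 0 ≤ tm m / tm nn := div_nonneg (htmpos m).le (htmpos nn).le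
      have hratio : tm m / tm nn ≤ 1 := by
        rw [div_le_one (htmpos nn)]
        exact htmmono m nn hmn
      have hφa : tm m / tm nn * a ∈ Icc (0:ℝ) 1 := ⟨mul_nonneg hrat0 ha.1, by
        calc tm m / tm nn * a ≤ 1 * a := mul_le_mul_of_nonneg_right hratio ha.1
          _ = a := one_mul a
          _ ≤ 1 := ha.2⟩
      have hφb : tm m / tm nn * b ∈ Icc (0:ℝ) 1 := ⟨mul_nonneg hrat0 hb.1, by
        calc tm m / tm nn * b ≤ 1 * b := mul_le_mul_of_nonneg_right hratio hb.1
          _ = b := one_mul b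
          _ ≤ 1 := hb.2⟩
      rw [hβvar nn _ _ hφa hφb (mul_le_mul_of_nonneg_left hab hrat0),
        hβvar m a b ha hb hab]
      congr 1
      field_simp [(htmpos nn).ne']
    · intro s hs
      set r := tm m * s with hr
      have hr0 : 0 ≤ r := mul_nonneg (htmpos m).le hs.1
      have hrtm : r ≤ tm m := by
        calc r = tm m * s := hr
          _ ≤ tm m * 1 := mul_le_mul_of_nonneg_left hs.2 (htmpos m).le
          _ = tm m := mul_one _
      have hrtn : r ≤ tm nn := le_trans hrtm (htmmono m nn hmn)
      have harg : tm nn * (tm m / tm nn * s) = r := by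
        rw [hr]
        field_simp [(htmpos nn).ne']
      have hgoal : β nn (tm m / tm nn * s) = τ nn r := by
        show τ nn (tm nn * (tm m / tm nn * s)) = τ nn r
        rw [harg]
      have hgoal2 : β m s = τ m r := rfl
      rw [hgoal, hgoal2]
      -- geometric estimate
      obtain ⟨hA1, _, hC1⟩ := hgl m r hr0 hrtm
      obtain ⟨hA2, _, hC2⟩ := hgl nn r hr0 hrtn
      have gYZ : r ≤ gromovProd (u (idx nn)) (u (idx m)) x := by
        have := hP m (idx nn) (hidxmono hmn) (idx m) le_rfl
        simp only [htm] at hrtm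
        linarith
      have sB := hhyp (u (idx nn)) (τ m r) (u (idx m)) x
      have hcomm : gromovProd (u (idx m)) (τ m r) x = gromovProd (τ m r) (u (idx m)) x :=
        gromov_comm _ _ _
      have hminB : r - h/2 ≤ min (gromovProd (u (idx nn)) (u (idx m)) x)
          (gromovProd (u (idx m)) (τ m r) x) := by
        refine le_min (by linarith) ?_
        rw [hcomm]
        exact hC1
      have sB' : r - h/2 - δ ≤ gromovProd (u (idx nn)) (τ m r) x := by linarith
      have sA := hhyp (τ nn r) (τ m r) (u (idx nn)) x
      have hminA : r - h/2 - δ ≤ min (gromovProd (τ nn r) (u (idx nn)) x)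
          (gromovProd (u (idx nn)) (τ m r) x) := le_min (by linarith) sB'
      have hfinal : r - h/2 - 2*δ ≤ gromovProd (τ nn r) (τ m r) x := by linarith
      unfold gromovProd at hfinal
      rw [dist_comm (τ nn r) x, dist_comm (τ m r) x] at hfinal
      linarith
end
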